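/- arXiv:2501.06565 — 9 statements merged into one kernel-verified Lean document; each statement's English description precedes it below -/
import Mathlib

section
/- Let R be an integral domain of characteristic 2 and let M be a finite multiset of elements of R. Then every element of R occurs in M with even multiplicity if and only if for every natural number l ≥ 0 one has Σ_{g ∈ M} g^l = 0 in R (the sum taken with multiplicity, with the convention 0^0 = 1). -/
private lemma even_nsmul_eq_zero {R : Type*} [AddCommMonoid R] {n : ℕ} (h : Even n)
    (hx : ∀ x : R, x + x = 0) (x : R) : n • x = 0 := by
  obtain ⟨k, rfl⟩ := h
  rw [add_nsmul, ← smul_add, hx, smul_zero]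

/-- Let `R` be an integral domain of characteristic 2 and `M` a finite
multiset of elements of `R`. Every element of `R` occurs in `M` with even
multiplicity iff `∑_{g ∈ M} g ^ l = 0` for every `l : ℕ` (sum with multiplicity). -/
theorem stmt_1 (R : Type*) [CommRing R] [IsDomain R] [CharP R 2] [DecidableEq R]
    (M : Multiset R) :
    (∀ a : R, Even (M.count a)) ↔ (∀ l : ℕ, (M.map (fun g => g ^ l)).sum = 0) := by
  haveI : Fact (Nat.Prime 2) := ⟨Nat.prime_two⟩
  have hchar : ∀ x : R, x + x = 0 := fun x => by
    have : (2 : R) * x = 0 := by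
      rw [show (2 : R) = ((2 : ℕ) : R) by norm_num, CharP.cast_eq_zero R 2, zero_mul]
    calc x + x = (2 : R) * x := by ring
    _ = 0 := this
  constructor
  · intro h l
    rw [Finset.sum_multiset_map_count]
    exact Finset.sum_eq_zero fun a _ => even_nsmul_eq_zero (h a) hchar _
  · intro h a
    -- set of elements with odd count
    set T : Finset R := M.toFinset.filter (fun b => Odd (M.count b)) with hT
    have hTsum : ∀ l : ℕ, (∑ b ∈ T, b ^ l) = 0 := by
      intro l
      have := h l
      rw [Finset.sum_multiset_map_count] at this
      rw [← Finset.sum_filter_add_sum_filter_not M.toFinset (fun b => Odd (M.count b))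
        (fun b => M.count b • b ^ l)] at this
      have h2 : ∑ b ∈ M.toFinset.filter (fun b => ¬ Odd (M.count b)),
          M.count b • b ^ l = 0 := by
        refine Finset.sum_eq_zero fun b hb => ?_
        have := (Finset.mem_filter.mp hb).2
        rw [Nat.not_odd_iff_even] at this
        exact even_nsmul_eq_zero this hchar _
      rw [h2, add_zero] at this
      rw [← this]
      refine Finset.sum_congr rfl fun b hb => ?_
      obtain ⟨k, hk⟩ := (Finset.mem_filter.mp hb).2
      rw [hk, add_nsmul, one_nsmul, even_nsmul_eq_zero (even_two_mul k) hchar, zero_add]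
    -- Vandermonde argument: T must be empty
    have hTempty : T = ∅ := by
      by_contra hne
      set n := T.card with hn
      set e := T.equivFin with he
      set v : Fin n → R := fun i => (e.symm i : R) with hv
      have hinj : Function.Injective v := fun i j hij => by
        apply e.symm.injective
        exact Subtype.ext hij
      have key : (fun _ : Fin n => (1 : R)) = 0 := by
        apply Matrix.eq_zero_of_forall_pow_sum_mul_pow_eq_zero hinj
        intro i
        have : ∑ j : Fin n, v j ^ (i : ℕ) = 0 := by
          rw [← hTsum (i : ℕ), ← Finset.sum_coe_sort T (fun b => b ^ (i : ℕ))]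
          exact (Equiv.sum_comp e.symm (fun b : T => (b : R) ^ (i : ℕ)))
        simpa [one_mul] using this
      have hn0 : 0 < n := Finset.card_pos.mpr (Finset.nonempty_iff_ne_empty.mpr hne)
      have := congrFun key ⟨0, hn0⟩
      simp at this
    rcases Nat.even_or_odd (M.count a) with h | h
    · exact h
    · exfalso
      have haT : a ∈ T := by
        refine Finset.mem_filter.mpr ⟨?_, h⟩
        rw [Multiset.mem_toFinset, ← Multiset.count_pos]
        exact h.pos
      rw [hTempty] at haT
      exact absurd haT (Finset.notMem_empty a)
end

section
/- Let σ be a type and let W be a finite additive subgroup of the polynomial ring MvPolynomial σ (ZMod 2). Call an element Λ ∈ W essential if for every Λ' ∈ W with card(support Λ') < card(support Λ) one has card(support(Λ + Λ')) ≥ card(support Λ). Then every element of W can be written as a finite sum of essential elements of W. -/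
/-- An element `Λ` of an additive subgroup `W` of polynomials over `ℤ₂` is
*essential* if for every `Λ' ∈ W` whose support is strictly smaller than that of
`Λ`, the support of `Λ + Λ'` is at least as large as that of `Λ`. -/
def IsEssential {σ : Type*} (W : AddSubgroup (MvPolynomial σ (ZMod 2)))
    (Λ : MvPolynomial σ (ZMod 2)) : Prop :=
  Λ ∈ W ∧ ∀ Λ' ∈ W, (MvPolynomial.support Λ').card < (MvPolynomial.support Λ).card →
    (MvPolynomial.support Λ).card ≤ (MvPolynomial.support (Λ + Λ')).card

/-- every element of a finite additive subgroup `W` of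
`MvPolynomial σ (ZMod 2)` is a finite sum of essential elements of `W`. -/
theorem stmt_2 (σ : Type*) (W : AddSubgroup (MvPolynomial σ (ZMod 2)))
    (hW : (W : Set (MvPolynomial σ (ZMod 2))).Finite)
    (Λ : MvPolynomial σ (ZMod 2)) (hΛ : Λ ∈ W) :
    ∃ s : Multiset (MvPolynomial σ (ZMod 2)),
      (∀ x ∈ s, IsEssential W x) ∧ s.sum = Λ := by
  suffices H : ∀ n (Λ : MvPolynomial σ (ZMod 2)), Λ ∈ W →
      (MvPolynomial.support Λ).card ≤ n →
      ∃ s : Multiset (MvPolynomial σ (ZMod 2)),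
        (∀ x ∈ s, IsEssential W x) ∧ s.sum = Λ from
    H _ Λ hΛ le_rfl
  intro n
  induction n using Nat.strong_induction_on with
  | _ n ih =>
    intro Λ hΛ hcard
    by_cases h0 : Λ = 0
    · exact ⟨0, by simp, by simp [h0]⟩
    by_cases hess : IsEssential W Λ
    · exact ⟨{Λ}, by simpa using hess, by simp⟩
    · have h1 : 1 ≤ (MvPolynomial.support Λ).card := by
        rw [Nat.one_le_iff_ne_zero]
        simpa [Finset.card_eq_zero, MvPolynomial.support_eq_empty] using h0
      simp only [IsEssential, not_and, not_forall] at hess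
      obtain ⟨Λ', hΛ', hlt, hlt2⟩ := hess hΛ
      rw [not_le] at hlt2
      have hself : Λ' + Λ' = 0 := by
        haveI : CharP (MvPolynomial σ (ZMod 2)) 2 := inferInstance
        exact CharTwo.add_self_eq_zero Λ'
      have h2 : Λ + Λ' ∈ W := W.add_mem hΛ hΛ'
      have hm : (MvPolynomial.support Λ).card - 1 < n :=
        lt_of_lt_of_le (Nat.sub_lt h1 one_pos) hcard
      obtain ⟨s1, hs1, hsum1⟩ := ih _ hm Λ' hΛ'
        (by omega)
      obtain ⟨s2, hs2, hsum2⟩ := ih _ hm (Λ + Λ') h2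
        (by omega)
      refine ⟨s1 + s2, ?_, ?_⟩
      · intro x hx
        rcases Multiset.mem_add.1 hx with h | h
        exacts [hs1 x h, hs2 x h]
      · rw [Multiset.sum_add, hsum1, hsum2]
        rw [add_comm, add_assoc, hself, add_zero]
end

section
/- Let k, n ≥ 1 and let (A_p)_{p∈V} be a finite family, indexed by a finite set V, of n-element multisets of nonzero linear forms in R = 𝔽₂[t₁,…,t_k]. Then the following are equivalent: (i) for every symmetric polynomial f over 𝔽₂ in n variables, Σ_{p∈V} f(A_p)/σ_n(A_p) lies in the image of R in its field of fractions K; (ii) for every nonzero linear form ρ ∈ R and every symmetric polynomial f over 𝔽₂ in n variables, there exist h, g ∈ R with ρ ∤ g such that Σ_{p∈V : ρ ∈ A_p} f(A_p)/σ_n(A_p) = h/g in K, where the sum is over those indices p for which ρ occurs in A_p. -/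
/-!
Nonzero linear forms over `𝔽₂` are prime, and a linear form divisible by another one equals it.
Hence for a fixed linear form `ρ`, the vertices `p` with `ρ ∉ A_p` contribute a fraction whose
denominator `∏ σₙ(A_p)` is prime to `ρ`, so (ii) says exactly that the full sum
`∑_p f(A_p)/σₙ(A_p)` can be written with a denominator prime to `ρ`. A fraction with numerator
in `R` over a product of primes, which for each of these primes also has a denominator prime to it,
lies in `R`: the primes cancel from the numerator one at a time.
-/

open MvPolynomial

noncomputable section

/-- The polynomial ring `R = 𝔽₂[t₁,…,t_k]`. -/
abbrev Rk (k : ℕ) : Type := MvPolynomial (Fin k) (ZMod 2)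

/-- The field of fractions `K` of `R`. -/
abbrev Kk (k : ℕ) : Type := FractionRing (Rk k)

/-- The canonical map `R → K`. -/
def toK (k : ℕ) : Rk k →+* Kk k := algebraMap _ _

section IsIntegerAt

variable {R K : Type*} [CommRing R] [Field K] [Algebra R K]

/-- For prime `ρ`: `x` lies in the localization of `R` at the prime ideal `(ρ)`. -/
def IsIntegerAt (ρ : R) (x : K) : Prop :=
  ∃ h g : R, ¬ ρ ∣ g ∧ x = algebraMap R K h / algebraMap R K g

theorem isIntegerAt_algebraMap {ρ : R} (hρ : ¬IsUnit ρ) (r : R) :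
    IsIntegerAt ρ (algebraMap R K r) :=
  ⟨r, 1, mt isUnit_of_dvd_one hρ, by rw [map_one, div_one]⟩

theorem IsIntegerAt.neg {ρ : R} {x : K} (hx : IsIntegerAt ρ x) : IsIntegerAt ρ (-x) := by
  obtain ⟨h, g, hg, rfl⟩ := hx
  exact ⟨-h, g, hg, by rw [map_neg, neg_div]⟩

variable [IsFractionRing R K]

theorem algebraMap_ne_zero_of_not_dvd {ρ g : R} (hg : ¬ρ ∣ g) : algebraMap R K g ≠ 0 :=
  IsFractionRing.to_map_eq_zero_iff.not.mpr fun h => hg (h ▸ dvd_zero ρ)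

theorem IsIntegerAt.add {ρ : R} (hρ : Prime ρ) {x y : K} (hx : IsIntegerAt ρ x)
    (hy : IsIntegerAt ρ y) : IsIntegerAt ρ (x + y) := by
  obtain ⟨h₁, g₁, hg₁, rfl⟩ := hx
  obtain ⟨h₂, g₂, hg₂, rfl⟩ := hy
  refine ⟨h₁ * g₂ + g₁ * h₂, g₁ * g₂, fun hdvd => (hρ.dvd_or_dvd hdvd).elim hg₁ hg₂, ?_⟩
  rw [div_add_div _ _ (algebraMap_ne_zero_of_not_dvd hg₁) (algebraMap_ne_zero_of_not_dvd hg₂)]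
  simp only [map_add, map_mul]

theorem IsIntegerAt.sub {ρ : R} (hρ : Prime ρ) {x y : K} (hx : IsIntegerAt ρ x)
    (hy : IsIntegerAt ρ y) : IsIntegerAt ρ (x - y) :=
  sub_eq_add_neg x y ▸ hx.add hρ hy.neg

theorem isIntegerAt_sum_div {ι : Type*} {ρ : R} (hρ : Prime ρ) (s : Finset ι) (a b : ι → R)
    (hb : ∀ i ∈ s, ¬ρ ∣ b i) :
    IsIntegerAt ρ (∑ i ∈ s, algebraMap R K (a i) / algebraMap R K (b i)) :=
  Finset.sum_induction _ (IsIntegerAt ρ) (fun _ _ => IsIntegerAt.add hρ)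
    (map_zero (algebraMap R K) ▸ isIntegerAt_algebraMap hρ.not_isUnit 0)
    fun i hi => ⟨a i, b i, hb i hi, rfl⟩

theorem isInteger_sum_div_mul_prod {ι : Type*} (s : Finset ι) (a b : ι → R)
    (hb : ∀ i ∈ s, b i ≠ 0) : IsLocalization.IsInteger R
      ((∑ i ∈ s, algebraMap R K (a i) / algebraMap R K (b i)) * algebraMap R K (∏ i ∈ s, b i)) := by
  classical
  refine ⟨∑ i ∈ s, a i * ∏ j ∈ s.erase i, b j, ?_⟩
  rw [Finset.sum_mul, map_sum]
  refine Finset.sum_congr rfl fun i hi => ?_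
  rw [← Finset.mul_prod_erase s b hi, map_mul, map_mul, ← mul_assoc,
    div_mul_cancel₀ _ (IsFractionRing.to_map_eq_zero_iff.not.mpr (hb i hi))]

theorem isInteger_of_forall_isIntegerAt {ι : Type*} {x : K} (s : Finset ι) (d : ι → R)
    (hd : ∀ j ∈ s, Prime (d j)) (hx : ∀ j ∈ s, IsIntegerAt (d j) x)
    (hint : IsLocalization.IsInteger R (x * algebraMap R K (∏ j ∈ s, d j))) :
    IsLocalization.IsInteger R x := by
  classical
  obtain ⟨N, hN⟩ := hint
  induction s using Finset.induction_on generalizing N with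
  | empty => exact ⟨N, by simpa using hN⟩
  | insert j s hj ih =>
    rw [Finset.prod_insert hj, map_mul] at hN
    have hdj := hd j (Finset.mem_insert_self j s)
    obtain ⟨h, g, hg, hxg⟩ := hx j (Finset.mem_insert_self j s)
    have hg0 : algebraMap R K g ≠ 0 := algebraMap_ne_zero_of_not_dvd hg
    have hcross : N * g = d j * (h * ∏ i ∈ s, d i) := IsFractionRing.injective R K <| by
      simp only [map_mul, hN, hxg]
      field_simp
    -- the denominator `g` of `x` is prime to `d j`, so `d j` cancels from `N / ∏ d`
    obtain ⟨N', rfl⟩ : d j ∣ N := (hdj.dvd_or_dvd ⟨_, hcross⟩).resolve_right hg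
    refine ih (fun i hi => hd i (Finset.mem_insert_of_mem hi))
      (fun i hi => hx i (Finset.mem_insert_of_mem hi)) N' ?_
    have hdj0 : algebraMap R K (d j) ≠ 0 := IsFractionRing.to_map_eq_zero_iff.not.mpr hdj.ne_zero
    rw [map_mul] at hN
    exact mul_left_cancel₀ hdj0 (by rw [hN]; ring)

end IsIntegerAt

namespace MvPolynomial

variable {σ F : Type*} [Field F]

theorem IsHomogeneous.irreducible_of_degree_one {ρ : MvPolynomial σ F} (hρ : ρ.IsHomogeneous 1)
    (hρ0 : ρ ≠ 0) : Irreducible ρ := by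
  refine irreducible_of_totalDegree_eq_one (hρ.totalDegree hρ0) fun c hc =>
    isUnit_iff_ne_zero.mpr ?_
  rintro rfl
  exact hρ0 (ext _ _ fun d => zero_dvd_iff.mp (hc d))

theorem IsHomogeneous.prime_of_degree_one {ρ : MvPolynomial σ F} (hρ : ρ.IsHomogeneous 1)
    (hρ0 : ρ ≠ 0) : Prime ρ :=
  (hρ.irreducible_of_degree_one hρ0).prime

theorem IsHomogeneous.eq_of_dvd_of_degree_one {ρ μ : MvPolynomial σ (ZMod 2)}
    (hρ : ρ.IsHomogeneous 1) (hρ0 : ρ ≠ 0) (hμ : μ.IsHomogeneous 1) (hμ0 : μ ≠ 0)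
    (h : ρ ∣ μ) : ρ = μ := by
  obtain ⟨u, hu⟩ := (hρ.irreducible_of_degree_one hρ0).associated_of_dvd
    (hμ.irreducible_of_degree_one hμ0) h
  obtain ⟨r, hr, hur⟩ := isUnit_iff_eq_C_of_isReduced.mp u.isUnit
  have hr1 : r = 1 := (by decide : ∀ r : ZMod 2, r ≠ 0 → r = 1) r hr.ne_zero
  rw [← hu, hur, hr1, C_1, mul_one]

variable {ι : Type*}

theorem IsHomogeneous.not_dvd_prod_of_degree_one {ρ : MvPolynomial σ (ZMod 2)}
    (hρ : ρ.IsHomogeneous 1) (hρ0 : ρ ≠ 0) {s : Finset ι} {v : ι → MvPolynomial σ (ZMod 2)}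
    (hv : ∀ i ∈ s, v i ≠ 0 ∧ (v i).IsHomogeneous 1) (hne : ∀ i ∈ s, v i ≠ ρ) :
    ¬ρ ∣ ∏ i ∈ s, v i := by
  rw [(hρ.prime_of_degree_one hρ0).dvd_finsetProd_iff]
  rintro ⟨i, hi, hdvd⟩
  exact hne i hi (hρ.eq_of_dvd_of_degree_one hρ0 (hv i hi).2 (hv i hi).1 hdvd).symm

end MvPolynomial

open scoped Classical

theorem stmt_5_general (k n : ℕ)
    (V : Type) [Fintype V]
    (A : V → Fin n → Rk k)
    (hA : ∀ p i, A p i ≠ 0 ∧ (A p i).IsHomogeneous 1) :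
    (∀ f : MvPolynomial (Fin n) (ZMod 2), f.IsSymmetric →
      ∃ r : Rk k,
        ∑ p : V, toK k (aeval (A p) f) / toK k (∏ i, A p i) = toK k r)
    ↔
    (∀ ρ : Rk k, ρ ≠ 0 → ρ.IsHomogeneous 1 →
      ∀ f : MvPolynomial (Fin n) (ZMod 2), f.IsSymmetric →
        ∃ h g : Rk k, ¬ ρ ∣ g ∧
          ∑ p ∈ Finset.univ.filter (fun p => ∃ i, A p i = ρ),
            toK k (aeval (A p) f) / toK k (∏ i, A p i) = toK k h / toK k g) := by
  have hprime {ρ : Rk k} (hρ0 : ρ ≠ 0) (hρ : ρ.IsHomogeneous 1) : Prime ρ :=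
    hρ.prime_of_degree_one hρ0
  have hsplit (ρ : Rk k) (f : MvPolynomial (Fin n) (ZMod 2)) :=
    Finset.sum_filter_add_sum_filter_not Finset.univ (fun p => ∃ i, A p i = ρ)
      fun p => toK k (aeval (A p) f) / toK k (∏ i, A p i)
  have hrest {ρ : Rk k} (hρ0 : ρ ≠ 0) (hρ : ρ.IsHomogeneous 1)
      (f : MvPolynomial (Fin n) (ZMod 2)) :
      IsIntegerAt ρ (∑ p ∈ Finset.univ.filter (fun p => ¬∃ i, A p i = ρ),
        toK k (aeval (A p) f) / toK k (∏ i, A p i)) :=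
    isIntegerAt_sum_div (hprime hρ0 hρ) _ _ _ fun p hp =>
      hρ.not_dvd_prod_of_degree_one hρ0 (fun i _ => hA p i)
        fun i _ hi => (Finset.mem_filter.mp hp).2 ⟨i, hi⟩
  constructor
  · intro hglobal ρ hρ0 hρ f hf
    obtain ⟨r, hr⟩ := hglobal f hf
    have := (isIntegerAt_algebraMap (hprime hρ0 hρ).not_isUnit r).sub (hprime hρ0 hρ)
      (hrest hρ0 hρ f)
    rwa [← toK, ← hr, ← hsplit, add_sub_cancel_right] at this
  · intro hlocal f hf
    have hx (j : V × Fin n) : IsIntegerAt (A j.1 j.2)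
        (∑ p, toK k (aeval (A p) f) / toK k (∏ i, A p i)) := by
      obtain ⟨hρ0, hρ⟩ := hA j.1 j.2
      rw [← hsplit]
      exact IsIntegerAt.add (hprime hρ0 hρ) (hlocal _ hρ0 hρ f hf) (hrest hρ0 hρ f)
    have hden := isInteger_sum_div_mul_prod (K := Kk k) Finset.univ (fun p => aeval (A p) f)
      (fun p => ∏ i, A p i) fun p _ => Finset.prod_ne_zero_iff.mpr fun i _ => (hA p i).1
    rw [← Fintype.prod_prod_type'] at hden
    obtain ⟨r, hr⟩ := isInteger_of_forall_isIntegerAt Finset.univ (fun j : V × Fin n => A j.1 j.2)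
      (fun j _ => hprime (hA j.1 j.2).1 (hA j.1 j.2).2) (fun j _ => hx j) hden
    exact ⟨r, hr.symm⟩

/-- for a finite family `(A_p)_{p ∈ V}` of `n`-element multisets of
nonzero linear forms, the integrality condition (i) holds iff for every nonzero
linear form `ρ` and every symmetric `f`, the sum over those `p` with `ρ ∈ A_p` of
`f(A_p)/σₙ(A_p)` can be written as `h/g` with `ρ ∤ g` (ii). -/
theorem stmt_5 (k n : ℕ) (hk : 1 ≤ k) (hn : 1 ≤ n)
    (V : Type) [Fintype V]
    (A : V → Fin n → Rk k)
    (hA : ∀ p i, A p i ≠ 0 ∧ (A p i).IsHomogeneous 1) :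
    (∀ f : MvPolynomial (Fin n) (ZMod 2), f.IsSymmetric →
      ∃ r : Rk k,
        ∑ p : V, toK k (aeval (A p) f) / toK k (∏ i, A p i) = toK k r)
    ↔
    (∀ ρ : Rk k, ρ ≠ 0 → ρ.IsHomogeneous 1 →
      ∀ f : MvPolynomial (Fin n) (ZMod 2), f.IsSymmetric →
        ∃ h g : Rk k, ¬ ρ ∣ g ∧
          ∑ p ∈ Finset.univ.filter (fun p => ∃ i, A p i = ρ),
            toK k (aeval (A p) f) / toK k (∏ i, A p i) = toK k h / toK k g) :=
  stmt_5_general k n V A hA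

end
end

section
/- Let k, n ≥ 1, let ρ be a nonzero linear form in R = 𝔽₂[t₁,…,t_k], let n_ρ > 1, and let (A_p)_{p∈V} be a ρ-cellular family of valence n_ρ consisting of n-element multisets. Then the family satisfies property (P) if and only if for every integer l ≥ 0 and every integer r with 1 ≤ r ≤ n_ρ − 1 one has Σ_{p∈V} σ_r(A_p^{(l)}) = 0 in R, where A_p^{(l)} denotes the multiset of l-th powers of the entries of A_p (with 0-th powers equal to 1). -/
open MvPolynomial

noncomputable section

/-- Two `n`-element multisets (presented as tuples) are congruent mod `ρ` if there
is a multiplicity-preserving bijection matching elements that differ by a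
multiple of `ρ`. -/
def CongMod {k n : ℕ} (ρ : Rk k) (A B : Fin n → Rk k) : Prop :=
  ∃ π : Equiv.Perm (Fin n), ∀ i, ρ ∣ A i - B (π i)

/-- Multiplicity of `ξ` in the tuple `A` (viewed as a multiset). -/
def cnt {k n : ℕ} (ξ : Rk k) (A : Fin n → Rk k) : ℕ :=
  Nat.card {i : Fin n // A i = ξ}

open scoped Classical in
/-- `Ifun S A` is the number of occurrences `I_A(S)` of the multiset `S` as a
submultiset of (the multiset of entries of) `A`, counted with multiplicity:
`∏_ξ C(multiplicity of ξ in A, multiplicity of ξ in S)`. -/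
def Ifun {k n : ℕ} (S : Multiset (Rk k)) (A : Fin n → Rk k) : ℕ :=
  ∏ ξ ∈ S.toFinset, Nat.choose (cnt ξ A) (S.count ξ)

/-- `esig n r x` is the `r`-th elementary symmetric polynomial of the entries of
the tuple `x`. -/
def esig {k : ℕ} (n r : ℕ) (x : Fin n → Rk k) : Rk k :=
  ∑ t ∈ Finset.powersetCard r Finset.univ, ∏ i ∈ t, x i

/-- A `ρ`-cellular family of valence `nρ`: a finite family, indexed by a finite
set `V` of even cardinality, of `n`-element multisets of nonzero linear forms,
each containing `ρ` with multiplicity exactly `nρ`, all congruent mod `ρ`. -/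
def Cellular {k n : ℕ} (ρ : Rk k) (nρ : ℕ) {V : Type} [Fintype V]
    (A : V → Fin n → Rk k) : Prop :=
  Even (Fintype.card V) ∧
  (∀ p i, A p i ≠ 0 ∧ (A p i).IsHomogeneous 1) ∧
  (∀ p, cnt ρ (A p) = nρ) ∧
  (∀ p q, CongMod ρ (A p) (A q))

/-- Property (P): for every multiset `S` of nonzero linear forms of cardinality
at most `nρ - 1` (including `S = ∅`), `∑_{p ∈ V} I_p(S)` is even. -/
def PropP {k n : ℕ} (nρ : ℕ) {V : Type} [Fintype V]
    (A : V → Fin n → Rk k) : Prop :=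
  ∀ S : Multiset (Rk k), (∀ ξ ∈ S, ξ ≠ 0 ∧ ξ.IsHomogeneous 1) → S.card ≤ nρ - 1 →
    Even (∑ p : V, Ifun S (A p))

/-!
Grouping the monomials of `σ_r(A_p^{(l)})` by the submultiset `S ⊆ A_p` they come from gives
`∑_p σ_r(A_p^{(l)}) = ∑_S (∑_p I_p(S)) · (∏ S)^l`, the sum running over multisets `S` of `r`
linear forms. In characteristic two, property (P) kills every coefficient. Conversely, nonzero
linear forms are prime and `𝔽₂[t]` has no unit other than `1`, so distinct multisets of linear
forms have distinct nonzero products; vanishing for all `l ≥ 1` then forces every coefficient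
to vanish by a Vandermonde argument. The case `S = ∅` is the evenness of `|V|`.
-/

theorem Multiset.count_powersetCard_card {α : Type*} [DecidableEq α] (M S : Multiset α)
    (T : Finset α) (hT : S.toFinset ⊆ T) :
    count S (powersetCard (card S) M) = ∏ ξ ∈ T, (count ξ M).choose (count ξ S) := by
  induction M using Multiset.induction generalizing S with
  | empty =>
    obtain rfl | ⟨ξ, hξ⟩ := S.empty_or_exists_mem
    · simp
    obtain ⟨S', rfl⟩ := exists_cons_of_mem hξ
    rw [card_cons, powersetCard_zero_right, count_zero, eq_comm]
    exact Finset.prod_eq_zero (hT (mem_toFinset.mpr hξ)) (by simp)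
  | cons a M ih =>
    by_cases ha : a ∈ S
    · obtain ⟨S', rfl⟩ := exists_cons_of_mem ha
      have haT : a ∈ T := hT (by simp)
      have hS' : S'.toFinset ⊆ T := subset_trans (by simp [Finset.subset_iff]; tauto) hT
      have hrest (N : Multiset α) (hN : ∀ ξ ∈ T.erase a, count ξ N = count ξ M) :
          ∏ ξ ∈ T.erase a, (count ξ N).choose (count ξ (a ::ₘ S')) =
            ∏ ξ ∈ T.erase a, (count ξ M).choose (count ξ S') :=
        Finset.prod_congr rfl fun ξ hξ => by
          rw [hN ξ hξ, count_cons_of_ne (Finset.ne_of_mem_erase hξ)]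
      -- Pascal's rule in the coordinate `a`; the factors at `ξ ≠ a` agree on both sides.
      rw [card_cons, powersetCard_cons, count_add, ← card_cons a, ih _ hT,
        count_map_eq_count' _ _ fun _ _ => (cons_inj_right a).mp, ih _ hS',
        ← Finset.mul_prod_erase T _ haT, ← Finset.mul_prod_erase T _ haT,
        ← Finset.mul_prod_erase T _ haT, hrest M fun _ _ => rfl,
        hrest (a ::ₘ M) fun ξ hξ => count_cons_of_ne (Finset.ne_of_mem_erase hξ) M,
        count_cons_self, count_cons_self, Nat.choose_succ_succ', add_mul, add_comm]
    · obtain rfl | hS := eq_or_ne S 0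
      · simp
      obtain ⟨m, hm⟩ := Nat.exists_eq_add_one_of_ne_zero (card_pos.mpr hS).ne'
      have hnot : S ∉ map (cons a) (powersetCard m M) := by
        simp only [mem_map, not_exists, not_and]
        rintro S' - rfl
        exact ha (mem_cons_self a S')
      rw [hm, powersetCard_cons, count_add, count_eq_zero.mpr hnot, add_zero, ← hm, ih _ hT]
      refine Finset.prod_congr rfl fun ξ _ => ?_
      by_cases hξ : ξ = a
      · subst hξ
        simp [count_eq_zero.mpr ha]
      · rw [count_cons_of_ne hξ]

namespace MvPolynomial

theorem prime_of_isHomogeneous_one {σ K : Type*} [Field K] {p : MvPolynomial σ K}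
    (hp0 : p ≠ 0) (hp : p.IsHomogeneous 1) : Prime p := by
  refine (irreducible_of_totalDegree_eq_one (hp.totalDegree hp0) fun x hx => ?_).prime
  refine isUnit_iff_ne_zero.mpr fun hx0 => hp0 (MvPolynomial.ext _ _ fun d => ?_)
  simpa [hx0] using hx d

instance {σ R : Type*} [CommRing R] [IsReduced R] [Subsingleton Rˣ] :
    Subsingleton (MvPolynomial σ R)ˣ where
  allEq u v := by
    obtain ⟨r, hr, hu⟩ := isUnit_iff_eq_C_of_isReduced.mp u.isUnit
    obtain ⟨s, hs, hv⟩ := isUnit_iff_eq_C_of_isReduced.mp v.isUnit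
    ext
    rw [hu, hv, ← hr.unit_spec, ← hs.unit_spec, Subsingleton.elim hr.unit hs.unit]

end MvPolynomial

theorem Multiset.eq_of_prod_eq_of_prime {M : Type*} [CommMonoidWithZero M] [IsCancelMulZero M]
    [Subsingleton Mˣ] {S T : Multiset M} (hS : ∀ x ∈ S, Prime x) (hT : ∀ x ∈ T, Prime x)
    (h : S.prod = T.prod) : S = T := by
  rw [← Multiset.rel_eq, ← associated_eq_eq]
  exact prime_factors_unique hS hT (associated_iff_eq.mpr h)

theorem even_iff_natCast_eq_zero {R : Type*} [AddMonoidWithOne R] [CharP R 2] (N : ℕ) :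
    Even N ↔ (N : R) = 0 :=
  even_iff_two_dvd.trans (CharP.cast_eq_zero_iff R 2 N).symm

theorem Finset.eq_zero_of_forall_sum_mul_pow_succ_eq_zero {R ι : Type*} [CommRing R]
    [IsDomain R] {s : Finset ι} {b c : ι → R} (hb : Set.InjOn b s) (hb0 : ∀ i ∈ s, b i ≠ 0)
    (h : ∀ l : ℕ, ∑ i ∈ s, c i * b i ^ (l + 1) = 0) : ∀ i ∈ s, c i = 0 := by
  let e := s.equivFin
  have hvdm := Matrix.eq_zero_of_forall_pow_sum_mul_pow_eq_zero
    (f := fun j => b (e.symm j)) (v := fun j => c (e.symm j) * b (e.symm j))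
    (fun j j' hjj' => e.symm.injective (Subtype.ext (hb (e.symm j).2 (e.symm j').2 hjj')))
    fun l => by
      rw [← h l, ← Finset.sum_coe_sort s, ← e.symm.sum_comp]
      simp only [mul_assoc, ← pow_succ']
  intro i hi
  have := congrFun hvdm (e ⟨i, hi⟩)
  simpa [hb0 i hi] using this

open Finset in
def entries {α : Type*} {n : ℕ} (A : Fin n → α) : Multiset α := univ.val.map A

theorem mem_entries {α : Type*} {n : ℕ} {A : Fin n → α} {a : α} :
    a ∈ entries A ↔ ∃ i, A i = a := by
  simp [entries]

section Counting

variable {k n : ℕ}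

theorem cnt_eq_count (ξ : Rk k) (A : Fin n → Rk k) : cnt ξ A = (entries A).count ξ := by
  classical
  rw [cnt, Nat.card_eq_fintype_card, Fintype.card_subtype, entries, Multiset.count_map]
  simp [Finset.card_def, Finset.filter_val, eq_comm]

theorem Ifun_eq_count_powersetCard (S : Multiset (Rk k)) (A : Fin n → Rk k) :
    Ifun S A = ((entries A).powersetCard (Multiset.card S)).count S := by
  classical
  rw [Multiset.count_powersetCard_card _ _ _ subset_rfl, Ifun]
  simp only [cnt_eq_count]

theorem esig_pow_eq_sum_powersetCard (r l : ℕ) (A : Fin n → Rk k) :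
    esig n r (fun i => A i ^ l) =
      (((entries A).powersetCard r).map fun S => S.prod ^ l).sum := by
  rw [esig, ← Finset.esymm_map_val, Multiset.esymm, entries]
  simp only [Multiset.powersetCard_map, Multiset.map_map, Function.comp_def,
    Multiset.prod_map_pow]

end Counting

section Family

variable {k n : ℕ} {V : Type} [Fintype V]

open Finset in
def submultisets (A : V → Fin n → Rk k) (r : ℕ) : Finset (Multiset (Rk k)) :=
  univ.biUnion fun p => ((entries (A p)).powersetCard r).toFinset

theorem mem_submultisets {A : V → Fin n → Rk k} {r : ℕ} {S : Multiset (Rk k)} :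
    S ∈ submultisets A r ↔ ∃ p, S ≤ entries (A p) ∧ Multiset.card S = r := by
  simp [submultisets, Multiset.mem_powersetCard]

theorem card_of_mem_submultisets {A : V → Fin n → Rk k} {r : ℕ} {S : Multiset (Rk k)}
    (hS : S ∈ submultisets A r) : Multiset.card S = r := by
  obtain ⟨p, -, hr⟩ := mem_submultisets.mp hS
  exact hr

theorem forall_of_mem_submultisets {P : Rk k → Prop} {A : V → Fin n → Rk k} {r : ℕ}
    (hA : ∀ p i, P (A p i)) {S : Multiset (Rk k)} (hS : S ∈ submultisets A r) :
    ∀ ξ ∈ S, P ξ := by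
  obtain ⟨p, hSp, -⟩ := mem_submultisets.mp hS
  intro ξ hξ
  obtain ⟨i, rfl⟩ := mem_entries.mp (Multiset.mem_of_le hSp hξ)
  exact hA p i

theorem sum_esig_pow_eq_sum_Ifun (A : V → Fin n → Rk k) (r l : ℕ)
    {𝒮 : Finset (Multiset (Rk k))} (h𝒮 : submultisets A r ⊆ 𝒮)
    (hcard : ∀ S ∈ 𝒮, Multiset.card S = r) :
    ∑ p, esig n r (fun i => A p i ^ l) =
      ∑ S ∈ 𝒮, ((∑ p, Ifun S (A p) : ℕ) : Rk k) * S.prod ^ l := by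
  classical
  have hp (p : V) :
      esig n r (fun i => A p i ^ l) = ∑ S ∈ 𝒮, (Ifun S (A p) : Rk k) * S.prod ^ l := by
    have hsub : ((entries (A p)).powersetCard r).toFinset ⊆ 𝒮 := fun S hS =>
      h𝒮 (mem_submultisets.mpr ⟨p, (Multiset.mem_powersetCard.mp
        (Multiset.mem_toFinset.mp hS))⟩)
    rw [esig_pow_eq_sum_powersetCard, Finset.sum_multiset_map_count,
      Finset.sum_subset hsub fun S _ hS => by
        rw [Multiset.count_eq_zero.mpr (mt Multiset.mem_toFinset.mpr hS), zero_smul]]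
    refine Finset.sum_congr rfl fun S hS => ?_
    rw [Ifun_eq_count_powersetCard, hcard S hS, nsmul_eq_mul]
  simp only [hp, Nat.cast_sum, Finset.sum_mul]
  exact Finset.sum_comm

end Family

theorem prod_injOn_linear {k : ℕ} :
    Set.InjOn Multiset.prod {S : Multiset (Rk k) | ∀ ξ ∈ S, ξ ≠ 0 ∧ ξ.IsHomogeneous 1} := by
  intro S hS T hT h
  rw [Set.mem_ofPred_eq] at hS hT
  exact Multiset.eq_of_prod_eq_of_prime
    (fun ξ hξ => MvPolynomial.prime_of_isHomogeneous_one (hS ξ hξ).1 (hS ξ hξ).2)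
    (fun ξ hξ => MvPolynomial.prime_of_isHomogeneous_one (hT ξ hξ).1 (hT ξ hξ).2) h

theorem stmt_6_general (k n : ℕ)
    (ρ : Rk k)
    (nρ : ℕ)
    (V : Type) [Fintype V] (A : V → Fin n → Rk k)
    (hcell : Cellular ρ nρ A) :
    PropP nρ A ↔
      (∀ l r : ℕ, 1 ≤ r → r ≤ nρ - 1 →
        ∑ p : V, esig n r (fun i => A p i ^ l) = 0) := by
  classical
  obtain ⟨hV, hlin, -, -⟩ := hcell
  constructor
  · intro hP l r _ hr
    rw [sum_esig_pow_eq_sum_Ifun A r l subset_rfl fun S hS => card_of_mem_submultisets hS]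
    refine Finset.sum_eq_zero fun S hS => ?_
    rw [← card_of_mem_submultisets hS] at hr
    rw [(even_iff_natCast_eq_zero _).mp (hP S (forall_of_mem_submultisets hlin hS) hr), zero_mul]
  · intro hR S hSlin hScard
    obtain rfl | hS0 := eq_or_ne S 0
    · simpa [Ifun] using hV
    have hlin𝒮 : ∀ T ∈ insert S (submultisets A (Multiset.card S)),
        ∀ ξ ∈ T, ξ ≠ 0 ∧ ξ.IsHomogeneous 1 :=
      Finset.forall_mem_insert _ _ _ |>.mpr
        ⟨hSlin, fun _ hT => forall_of_mem_submultisets hlin hT⟩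
    have hzero (l : ℕ) : ∑ T ∈ insert S (submultisets A (Multiset.card S)),
        ((∑ p, Ifun T (A p) : ℕ) : Rk k) * T.prod ^ (l + 1) = 0 := by
      rw [← sum_esig_pow_eq_sum_Ifun A _ (l + 1) (Finset.subset_insert S (submultisets A _)),
        hR (l + 1) _ (Multiset.card_pos.mpr hS0) hScard]
      exact Finset.forall_mem_insert _ _ _ |>.mpr
        ⟨rfl, fun _ hT => card_of_mem_submultisets hT⟩
    exact (even_iff_natCast_eq_zero _).mpr (Finset.eq_zero_of_forall_sum_mul_pow_succ_eq_zero
      (prod_injOn_linear.mono hlin𝒮)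
      (fun T hT => Multiset.prod_ne_zero fun h0 => (hlin𝒮 T hT 0 h0).1 rfl)
      hzero S (Finset.mem_insert_self _ _))

/-- a `ρ`-cellular family of valence `nρ > 1` satisfies property (P)
iff `∑_{p ∈ V} σ_r(A_p^{(l)}) = 0` for all `l ≥ 0` and `1 ≤ r ≤ nρ - 1`. -/
theorem stmt_6 (k n : ℕ) (hk : 1 ≤ k) (hn : 1 ≤ n)
    (ρ : Rk k) (hρ0 : ρ ≠ 0) (hρ1 : ρ.IsHomogeneous 1)
    (nρ : ℕ) (hnρ : 1 < nρ)
    (V : Type) [Fintype V] (A : V → Fin n → Rk k)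
    (hcell : Cellular ρ nρ A) :
    PropP nρ A ↔
      (∀ l r : ℕ, 1 ≤ r → r ≤ nρ - 1 →
        ∑ p : V, esig n r (fun i => A p i ^ l) = 0) :=
  stmt_6_general k n ρ nρ V A hcell

end
end

section
/- Let k, n ≥ 1, let ρ be a nonzero linear form in R = 𝔽₂[t₁,…,t_k], let n_ρ ≥ 1, and let (A_p)_{p∈V} be a ρ-cellular family of valence n_ρ consisting of n-element multisets. If the family is ρ-divisible, then for all integers l, u ≥ 1 one has ρ^{n_ρ} divides Σ_{p∈V} σ_u(A_p^{(l)}) in R, where A_p^{(l)} denotes the multiset of l-th powers of the entries of A_p. -/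
/-!
Write `σₙ(A_p) = ρ^N B_p`, where `B_p` is the product of the entries of `A_p` other than `N`
copies of `ρ`. In characteristic two `(1 + ρX)^(2^s) = 1 + ρ^(2^s) X^(2^s)`, so comparing
coefficients of `(1 + ρX)^(2^s - N) ∏ᵢ (1 + aᵢX)` expresses `B_p` as a combination of the
`σ_b(A_p)` with coefficients in `R` that do not depend on `p`. Hence, for symmetric `f`,
`∑_p f(A_p) / ρ^N = ∑_p f(A_p) B_p / σₙ(A_p)` is an `R`-combination of the sums
`∑_p (f σ_b)(A_p) / σₙ(A_p)`, which have denominators prime to `ρ` by `ρ`-divisibility. Since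
the nonzero linear form `ρ` is prime, `ρ^N` divides `∑_p f(A_p)`; take `f = σ_u(x₁ˡ, …, xₙˡ)`.
-/

open MvPolynomial

noncomputable section

/-- A finite family `(A_p)_{p ∈ V}` of `n`-element multisets is `ρ`-divisible if
for every symmetric polynomial `f` over `𝔽₂` in `n` variables there are
`h, g ∈ R` with `ρ ∤ g` such that `∑_{p ∈ V} f(A_p)/σₙ(A_p) = h/g` in `K`. -/
def RhoDivisible {k n : ℕ} (ρ : Rk k) {V : Type} [Fintype V]
    (A : V → Fin n → Rk k) : Prop :=
  ∀ f : MvPolynomial (Fin n) (ZMod 2), f.IsSymmetric →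
    ∃ h g : Rk k, ¬ ρ ∣ g ∧
      ∑ p : V, toK k (aeval (A p) f) / toK k (∏ i, A p i) = toK k h / toK k g

open Finset

namespace Polynomial

variable {R ι : Type*} [CommRing R]

theorem coeff_prod_one_add_C_mul_X (s : Finset ι) (x : ι → R) (r : ℕ) :
    (∏ i ∈ s, (1 + C (x i) * X)).coeff r = ∑ t ∈ s.powersetCard r, ∏ i ∈ t, x i := by
  classical
  simp_rw [prod_one_add, prod_mul_distrib, prod_const, ← map_prod, finsetSum_coeff,
    coeff_C_mul_X_pow, powersetCard_eq_filter, sum_filter, eq_comm (a := r)]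

theorem coeff_one_add_C_mul_X_pow (a : R) (M r : ℕ) :
    ((1 + C a * X) ^ M).coeff r = (M.choose r : R) * a ^ r := by
  rw [← card_range M, ← prod_const, coeff_prod_one_add_C_mul_X,
    sum_congr rfl fun t ht => by rw [prod_const, (mem_powersetCard.1 ht).2], sum_const,
    card_powersetCard, nsmul_eq_mul]

theorem _root_.Finset.prod_compl_eq_sum_choose_mul_esymm [CharP R 2] [Fintype ι] [DecidableEq ι]
    (ρ : R) (x : ι → R) (S : Finset ι) (hS : ∀ i ∈ S, x i = ρ) :
    ∏ i ∈ Sᶜ, x i = ∑ ab ∈ antidiagonal #Sᶜ,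
      ((2 ^ Fintype.card ι - #S).choose ab.1 : R) * ρ ^ ab.1 *
        ∑ t ∈ powersetCard ab.2 univ, ∏ i ∈ t, x i := by
  set s := Fintype.card ι
  set G : R[X] := ∏ i ∈ Sᶜ, (1 + C (x i) * X)
  have hS_le : #S ≤ 2 ^ s := (card_le_univ S).trans (Nat.lt_two_pow_self).le
  have hSc_lt : #Sᶜ < 2 ^ s := (card_le_univ _).trans_lt Nat.lt_two_pow_self
  have hsplit : ∏ i, (1 + C (x i) * X : R[X]) = (1 + C ρ * X) ^ #S * G := by
    rw [← prod_mul_prod_compl S, ← prod_const]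
    exact congrArg (· * G) (prod_congr rfl fun i hi => by rw [hS i hi])
  have hfrob : (1 + C ρ * X : R[X]) ^ (2 ^ s - #S) * ∏ i, (1 + C (x i) * X)
      = G + C (ρ ^ 2 ^ s) * X ^ 2 ^ s * G := by
    rw [hsplit, ← mul_assoc, ← pow_add, Nat.sub_add_cancel hS_le, add_pow_char_pow, one_pow,
      mul_pow, ← C_pow, add_mul, one_mul]
  have := congrArg (coeff · #Sᶜ) hfrob
  simp only [coeff_mul, coeff_one_add_C_mul_X_pow, coeff_prod_one_add_C_mul_X] at this
  rw [this, coeff_add, mul_assoc, coeff_C_mul, coeff_X_pow_mul', if_neg (not_le.2 hSc_lt),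
    mul_zero, add_zero, coeff_prod_one_add_C_mul_X, powersetCard_self, sum_singleton]

end Polynomial

theorem MvPolynomial.IsHomogeneous.prime_of_degree_one_s8 {σ F : Type*} [Field F] {φ : MvPolynomial σ F} (hφ0 : φ ≠ 0)
    (hφ : φ.IsHomogeneous 1) : Prime φ := by
  refine (irreducible_of_totalDegree_eq_one (hφ.totalDegree hφ0) fun c hc => ?_).prime
  obtain ⟨d, hd⟩ := MvPolynomial.ne_zero_iff.1 hφ0
  exact isUnit_iff_ne_zero.2 fun hc0 => hd (zero_dvd_iff.1 (hc0 ▸ hc d))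

theorem MvPolynomial.IsSymmetric.expand {σ R : Type*} [CommSemiring R]
    {φ : MvPolynomial σ R} (hφ : φ.IsSymmetric) (p : ℕ) : (expand p φ).IsSymmetric :=
  fun e => by rw [rename_expand, hφ e]

section FractionsPrimeTo

variable {R : Type*} (K : Type*) [CommRing R] [IsDomain R] [Field K] [Algebra R K]
  [IsFractionRing R K] (ρ : R) [(Ideal.span {ρ}).IsPrime]

abbrev fractionsPrimeTo : Subalgebra R K :=
  Localization.subalgebra.ofField K (Ideal.span {ρ}).primeCompl
    (Ideal.primeCompl_le_nonZeroDivisors _)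

variable {K ρ}

theorem mem_fractionsPrimeTo_iff {z : K} :
    z ∈ fractionsPrimeTo K ρ ↔ ∃ h g : R, ¬ ρ ∣ g ∧ z = algebraMap R K h / algebraMap R K g := by
  change (∃ (a s : R) (_ : s ∈ (Ideal.span {ρ}).primeCompl), z = _ * _⁻¹) ↔ _
  simp only [Ideal.mem_primeCompl_iff, Ideal.mem_span_singleton, div_eq_mul_inv, exists_prop]

theorem pow_dvd_of_div_mem_fractionsPrimeTo (hρ0 : ρ ≠ 0) {a : R} {N : ℕ}
    (ha : algebraMap R K a / algebraMap R K (ρ ^ N) ∈ fractionsPrimeTo K ρ) : ρ ^ N ∣ a := by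
  obtain ⟨h, g, hg, hag⟩ := mem_fractionsPrimeTo_iff.1 ha
  have hρ : Prime ρ := (Ideal.span_singleton_prime hρ0).1 ‹_›
  have hg0 : g ≠ 0 := fun h0 => hg (h0 ▸ dvd_zero ρ)
  rw [div_eq_div_iff (by simpa using pow_ne_zero N hρ0) (by simpa using hg0),
    ← map_mul, ← map_mul, (IsFractionRing.injective R K).eq_iff] at hag
  exact hρ.pow_dvd_of_dvd_mul_right N hg ⟨h, hag.trans (mul_comm _ _)⟩

end FractionsPrimeTo

theorem div_pow_eq_sum_esymm_div_prod {R K ι : Type*} [CommRing R] [IsDomain R] [CharP R 2]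
    [Field K] [Algebra R K] [IsFractionRing R K] [Fintype ι] [DecidableEq ι] {ρ : R}
    {x : ι → R} (hx : ∀ i, x i ≠ 0) {S : Finset ι} (hS : ∀ i ∈ S, x i = ρ) (a : R) :
    algebraMap R K a / algebraMap R K (ρ ^ #S) = ∑ ab ∈ antidiagonal #Sᶜ,
      algebraMap R K ((2 ^ Fintype.card ι - #S).choose ab.1 * ρ ^ ab.1) *
        (algebraMap R K (a * ∑ t ∈ powersetCard ab.2 univ, ∏ i ∈ t, x i) /
          algebraMap R K (∏ i, x i)) := by
  have hprod : ∏ i, x i = ρ ^ #S * ∏ i ∈ Sᶜ, x i := by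
    rw [← prod_mul_prod_compl S, ← prod_const]
    exact congrArg (· * _) (prod_congr rfl hS)
  have hB0 : algebraMap R K (∏ i ∈ Sᶜ, x i) ≠ 0 :=
    (map_ne_zero_iff _ (IsFractionRing.injective R K)).2 (prod_ne_zero_iff.2 fun i _ => hx i)
  rw [← mul_div_mul_right _ _ hB0, ← map_mul, ← map_mul, ← hprod,
    prod_compl_eq_sum_choose_mul_esymm ρ x S hS, mul_sum, map_sum, sum_div]
  exact sum_congr rfl fun ab _ => by simp only [map_mul]; ring

theorem aeval_esymm_eq_esig {k n : ℕ} (x : Fin n → Rk k) (r : ℕ) :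
    aeval x (esymm (Fin n) (ZMod 2) r) = esig n r x := by
  simp [esymm, esig, map_sum, map_prod]

theorem RhoDivisible.pow_dvd_sum_aeval {k n : ℕ} {ρ : Rk k} {V : Type} [Fintype V]
    {A : V → Fin n → Rk k} (hdiv : RhoDivisible ρ A) (hρ : Prime ρ) (hA0 : ∀ p i, A p i ≠ 0)
    {N : ℕ} (hN : ∀ p, ∃ S : Finset (Fin n), #S = N ∧ ∀ i ∈ S, A p i = ρ)
    {f : MvPolynomial (Fin n) (ZMod 2)} (hf : f.IsSymmetric) :
    ρ ^ N ∣ ∑ p, aeval (A p) f := by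
  classical
  have := (Ideal.span_singleton_prime hρ.ne_zero).2 hρ
  choose S hSN hS using hN
  set φ := algebraMap (Rk k) (Kk k)
  have hexpand : ∀ p, φ (aeval (A p) f) / φ (ρ ^ N) = ∑ ab ∈ antidiagonal (n - N),
      φ ((2 ^ n - N).choose ab.1 * ρ ^ ab.1) *
        (φ (aeval (A p) (f * esymm (Fin n) (ZMod 2) ab.2)) / φ (∏ i, A p i)) := by
    intro p
    have h := div_pow_eq_sum_esymm_div_prod (K := Kk k) (hA0 p) (hS p) (aeval (A p) f)
    rw [card_compl, Fintype.card_fin, hSN p] at h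
    rw [h]
    simp only [map_mul, aeval_esymm_eq_esig]
    rfl
  have hmem : ∀ g : MvPolynomial (Fin n) (ZMod 2), g.IsSymmetric →
      ∑ p, φ (aeval (A p) g) / φ (∏ i, A p i) ∈ fractionsPrimeTo (Kk k) ρ := by
    intro g hg
    obtain ⟨h, g', hg', heq⟩ := hdiv g hg
    exact mem_fractionsPrimeTo_iff.2 ⟨h, g', hg', heq⟩
  refine pow_dvd_of_div_mem_fractionsPrimeTo (K := Kk k) hρ.ne_zero ?_
  rw [map_sum, sum_div, sum_congr rfl fun p _ => hexpand p, sum_comm]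
  exact sum_mem fun ab _ => by
    rw [← mul_sum]
    exact mul_mem (Subalgebra.algebraMap_mem _ _) (hmem _ (hf.mul (esymm_isSymmetric _ _ _)))

theorem cnt_eq_card_filter {k n : ℕ} (ξ : Rk k) (A : Fin n → Rk k) :
    cnt ξ A = #{i | A i = ξ} := by
  rw [cnt, Nat.card_eq_fintype_card, Fintype.card_subtype]

theorem stmt_8_general (k n : ℕ)
    (ρ : Rk k) (hρ0 : ρ ≠ 0) (hρ1 : ρ.IsHomogeneous 1)
    (nρ : ℕ)
    (V : Type) [Fintype V] (A : V → Fin n → Rk k)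
    (hcell : Cellular ρ nρ A)
    (hdiv : RhoDivisible ρ A) :
    ∀ l u : ℕ, 1 ≤ l → 1 ≤ u →
      ρ ^ nρ ∣ ∑ p : V, esig n u (fun i => A p i ^ l) := by
  intro l u _ _
  obtain ⟨-, hlin, hcnt, -⟩ := hcell
  have hρA : ∀ p, ∃ S : Finset (Fin n), #S = nρ ∧ ∀ i ∈ S, A p i = ρ := fun p =>
    ⟨_, (cnt_eq_card_filter ρ (A p)).symm.trans (hcnt p), fun i hi => (mem_filter.1 hi).2⟩
  have h := hdiv.pow_dvd_sum_aeval (hρ1.prime_of_degree_one_s8 hρ0) (fun p i => (hlin p i).1) hρA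
    ((esymm_isSymmetric (Fin n) (ZMod 2) u).expand l)
  simp only [aeval_expand, aeval_esymm_eq_esig] at h
  exact h

/-- if a `ρ`-cellular family of valence `nρ ≥ 1` is `ρ`-divisible,
then `ρ^{nρ}` divides `∑_{p ∈ V} σ_u(A_p^{(l)})` for all `l, u ≥ 1`. -/
theorem stmt_8 (k n : ℕ) (hk : 1 ≤ k) (hn : 1 ≤ n)
    (ρ : Rk k) (hρ0 : ρ ≠ 0) (hρ1 : ρ.IsHomogeneous 1)
    (nρ : ℕ) (hnρ : 1 ≤ nρ)
    (V : Type) [Fintype V] (A : V → Fin n → Rk k)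
    (hcell : Cellular ρ nρ A)
    (hdiv : RhoDivisible ρ A) :
    ∀ l u : ℕ, 1 ≤ l → 1 ≤ u →
      ρ ^ nρ ∣ ∑ p : V, esig n u (fun i => A p i ^ l) :=
  stmt_8_general k n ρ hρ0 hρ1 nρ V A hcell hdiv
end
end

section
/- Let k, n ≥ 1 and let ρ be a nonzero linear form in R = 𝔽₂[t₁,…,t_k]. Let F₁, …, F_m be finitely many ρ-cellular families of valences n₁, …, n_m respectively, all consisting of n-element multisets, with pairwise disjoint index sets V₁, …, V_m, such that: (a) whenever n_i = 1, the index set V_i has exactly 2 elements; and (b) whenever i ≠ j, n_i = n_j > 1, p ∈ V_i and q ∈ V_j, the multisets A_p and A_q are NOT congruent mod ρ. Then the combined family (A_p)_{p ∈ V₁ ∪ … ∪ V_m} is ρ-divisible if and only if each family F_i is ρ-divisible. -/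
/-!
Let `𝒪 ⊆ K` be the localization of `R` at `(ρ)` and `S_A(f) = ∑_p f(A_p)/σₙ(A_p)`; a family is
`ρ`-divisible iff `S_A(f) ∈ 𝒪` for all symmetric `f`, so one direction is closure of `𝒪` under
sums. Conversely, a family of valence `0` has no pole at `ρ`, and in a two-member family of
valence `1` the two simple poles have residues congruent mod `ρ` and cancel in characteristic `2`.
For the remaining families `Fⱼ` (valence `> 1`) we therefore know `∑ⱼ Sⱼ(F) ∈ 𝒪` for every
symmetric `F`. Inside one family the members are congruent mod `ρ`, so by Frobenius
`G(A_p)^(2^n) ≡ G(A_q)^(2^n)` mod `ρ^(2^n)`, which beats the pole order `nⱼ ≤ n`: hence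
`Sⱼ(G^(2^n) f) ≡ χⱼ(G) Sⱼ(f)` mod `𝒪` for the character `χⱼ(G) = G(A_{qⱼ})^(2^n)`. Members of
different remaining families are not congruent mod `ρ` (by the valence, or by hypothesis (b)), so
some elementary symmetric polynomial separates `χᵢ` and `χⱼ` by a unit of `𝒪`; Artin's argument
for the independence of characters then isolates each `Sⱼ(f) ∈ 𝒪`.
-/

open MvPolynomial

noncomputable section

theorem MvPolynomial.prime_of_isHomogeneous_one_s10 {σ F : Type*} [Field F] {p : MvPolynomial σ F}
    (h0 : p ≠ 0) (h1 : p.IsHomogeneous 1) : Prime p := by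
  refine (irreducible_of_totalDegree_eq_one (h1.totalDegree h0) fun x hx => ?_).prime
  obtain ⟨d, hd⟩ := exists_coeff_ne_zero h0
  exact (ne_zero_of_dvd_ne_zero hd (hx d)).isUnit

theorem MvPolynomial.eq_of_dvd_of_isHomogeneous_one {σ : Type*} {p q : MvPolynomial σ (ZMod 2)}
    (hp : p.IsHomogeneous 1) (hq0 : q ≠ 0) (hq : q.IsHomogeneous 1) (h : p ∣ q) : q = p := by
  obtain ⟨c, rfl⟩ := h
  have hp0 : p ≠ 0 := left_ne_zero_of_mul hq0
  have hc0 : c ≠ 0 := right_ne_zero_of_mul hq0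
  have hdeg := totalDegree_mul_of_isDomain hp0 hc0
  rw [hq.totalDegree hq0, hp.totalDegree hp0] at hdeg
  rw [totalDegree_eq_zero_iff_eq_C.mp (by omega : c.totalDegree = 0)] at hc0 ⊢
  have hc1 : coeff 0 c = 1 := Fin.eq_one_of_ne_zero _ (C_ne_zero.mp hc0)
  rw [hc1, map_one, mul_one]

theorem Multiset.eq_of_card_eq_of_esymm_eq {D : Type*} [CommRing D] [IsDomain D]
    {s t : Multiset D} (hcard : card s = card t) (h : ∀ r, s.esymm r = t.esymm r) :
    s = t := by
  have hprod : (s.map fun r => Polynomial.X + Polynomial.C r).prod =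
      (t.map fun r => Polynomial.X + Polynomial.C r).prod := by
    simp only [prod_X_add_C_eq_sum_esymm, hcard, h]
  have hroots := congrArg Polynomial.roots hprod
  simp only [← sub_neg_eq_add, ← Polynomial.C_neg] at hroots
  rw [← Function.comp_def (fun r => Polynomial.X - Polynomial.C r) Neg.neg, ← map_map, ← map_map,
    Polynomial.roots_multiset_prod_X_sub_C, Polynomial.roots_multiset_prod_X_sub_C] at hroots
  exact map_injective neg_injective hroots

theorem exists_perm_of_esymm_map_eq {D ι : Type*} [CommRing D] [IsDomain D] [Fintype ι]
    {a b : ι → D}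
    (h : ∀ r, (Finset.univ.val.map a).esymm r = (Finset.univ.val.map b).esymm r) :
    ∃ π : Equiv.Perm ι, ∀ i, a i = b (π i) := by
  classical
  have hab := Multiset.eq_of_card_eq_of_esymm_eq (by simp) h
  have hfiber : ∀ c, Fintype.card {i // a i = c} = Fintype.card {i // b i = c} := by
    intro c
    simpa [Fintype.card_subtype, Finset.card, Multiset.count_map, eq_comm] using
      congrArg (Multiset.count c) hab
  let e c : {i // a i = c} ≃ {i // b i = c} := Fintype.equivOfCardEq (hfiber c)
  exact ⟨Equiv.ofFiberEquiv e, fun i => (Equiv.ofFiberEquiv_map e i).symm⟩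

theorem Ideal.Quotient.mk_span_singleton_eq_iff {R : Type*} [CommRing R] {p x y : R} :
    Ideal.Quotient.mk (Ideal.span {p}) x = Ideal.Quotient.mk (Ideal.span {p}) y ↔
      p ∣ x - y := by
  rw [Ideal.Quotient.mk_eq_mk_iff_sub_mem, Ideal.mem_span_singleton]

theorem ne_zero_of_not_dvd {M : Type*} [SemigroupWithZero M] {p s : M} (hs : ¬ p ∣ s) :
    s ≠ 0 := by
  rintro rfl
  exact hs (dvd_zero p)

section PrimeLocalization

variable {R : Type*} (K : Type*) [CommRing R] [IsDomain R] [Field K] [Algebra R K]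
  [IsFractionRing R K] {p : R}

def primeLocalization (hp : Prime p) : Subalgebra R K :=
  haveI := (Ideal.span_singleton_prime hp.ne_zero).mpr hp
  Localization.subalgebra.ofField K (Ideal.span {p}).primeCompl
    (Ideal.primeCompl_le_nonZeroDivisors _)

variable {K} (hp : Prime p)

theorem mem_primeLocalization {x : K} :
    x ∈ primeLocalization K hp ↔
      ∃ a s : R, ¬ p ∣ s ∧ x = algebraMap R K a / algebraMap R K s := by
  simp only [div_eq_mul_inv, ← Ideal.mem_span_singleton]
  exact ⟨fun ⟨a, s, hs, hx⟩ => ⟨a, s, hs, hx⟩, fun ⟨a, s, hs, hx⟩ => ⟨a, s, hs, hx⟩⟩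

theorem div_mem_primeLocalization (a : R) {s : R} (hs : ¬ p ∣ s) :
    algebraMap R K a / algebraMap R K s ∈ primeLocalization K hp :=
  (mem_primeLocalization hp).mpr ⟨a, s, hs, rfl⟩

theorem mul_div_mul_mem_primeLocalization {b : R} (hb : b ≠ 0) (a : R) {s : R}
    (hs : ¬ p ∣ s) :
    algebraMap R K (b * a) / algebraMap R K (b * s) ∈ primeLocalization K hp := by
  rw [map_mul, map_mul, mul_div_mul_left _ _
    (IsFractionRing.to_map_ne_zero_of_mem_nonZeroDivisors (mem_nonZeroDivisors_of_ne_zero hb))]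
  exact div_mem_primeLocalization hp a hs

end PrimeLocalization

theorem mem_of_forall_sum_mul_mem {K M ι S : Type*} [CommRing K] [Monoid M] [SetLike S K]
    [SubringClass S K] {T : S} [DecidableEq ι] (χ : ι → M →* K) (hχ : ∀ i G, χ i G ∈ T)
    (J : Finset ι) (hsep : ∀ i ∈ J, ∀ j ∈ J, i ≠ j → ∃ G, ∃ u ∈ T, (χ i G - χ j G) * u = 1)
    (s : ι → K) (hs : ∀ G, ∑ i ∈ J, χ i G * s i ∈ T) : ∀ i ∈ J, s i ∈ T := by
  induction J using Finset.strongInduction generalizing s with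
  | H J ih =>
  intro i hi
  by_cases hJ : ∃ j ∈ J, j ≠ i
  swap
  · push Not at hJ
    simpa [Finset.sum_eq_single_of_mem i hi fun j hj hji => absurd (hJ j hj) hji] using hs 1
  obtain ⟨j, hj, hji⟩ := hJ
  obtain ⟨G₀, u, hu, hG₀u⟩ := hsep i hi j hj hji.symm
  set s' := fun l => (χ l G₀ - χ j G₀) * s l
  -- Artin's trick: this combination of two relations has no `s j` term
  have hs' : ∀ G, ∑ l ∈ J.erase j, χ l G * s' l ∈ T := by
    intro G
    have : ∑ l ∈ J.erase j, χ l G * s' l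
        = ∑ l ∈ J, χ l (G * G₀) * s l - χ j G₀ * ∑ l ∈ J, χ l G * s l := by
      rw [Finset.sum_erase _ (by simp [s']), Finset.mul_sum, ← Finset.sum_sub_distrib]
      exact Finset.sum_congr rfl fun l _ => by simp only [s', map_mul]; ring
    rw [this]
    exact sub_mem (hs _) (mul_mem (hχ j G₀) (hs G))
  have hs'i := ih _ (Finset.erase_ssubset hj)
    (fun a ha b hb => hsep a (Finset.mem_of_mem_erase ha) b (Finset.mem_of_mem_erase hb))
    s' hs' i (Finset.mem_erase.mpr ⟨hji.symm, hi⟩)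
  have : s i = u * s' i := by simp only [s']; linear_combination (-s i) * hG₀u
  exact this ▸ mul_mem hu hs'i

theorem sum_subtype_mem_of_sum_mem {ι K S : Type*} [Fintype ι] [AddCommGroup K] [SetLike S K]
    [AddSubgroupClass S K] {T : S} (p : ι → Prop) [DecidablePred p] {x : ι → K}
    (hsum : ∑ i, x i ∈ T) (hx : ∀ i, ¬ p i → x i ∈ T) : ∑ i : {i // p i}, x i ∈ T := by
  rw [← Fintype.sum_subtype_add_sum_subtype p x] at hsum
  simpa using sub_mem hsum (sum_mem (t := Finset.univ) fun (i : {i // ¬ p i}) _ => hx i i.2)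

section LinearForms

variable {k n : ℕ} {ρ : Rk k}

def IsLinearForm (ℓ : Rk k) : Prop := ℓ ≠ 0 ∧ ℓ.IsHomogeneous 1

theorem IsLinearForm.dvd_iff_eq (hρ1 : ρ.IsHomogeneous 1) {ℓ : Rk k}
    (hℓ : IsLinearForm ℓ) : ρ ∣ ℓ ↔ ℓ = ρ :=
  ⟨eq_of_dvd_of_isHomogeneous_one hρ1 hℓ.1 hℓ.2, fun h => h ▸ dvd_rfl⟩

theorem IsLinearForm.eq_iff_eq_of_dvd_sub (hρ1 : ρ.IsHomogeneous 1) {ℓ μ : Rk k}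
    (hℓ : IsLinearForm ℓ) (hμ : IsLinearForm μ) (h : ρ ∣ ℓ - μ) : ℓ = ρ ↔ μ = ρ := by
  rw [← hℓ.dvd_iff_eq hρ1, ← hμ.dvd_iff_eq hρ1]
  exact ⟨fun h' => by simpa using dvd_sub h' h, fun h' => by simpa using dvd_add h h'⟩

open scoped Classical in
def rhoFreePart (ρ : Rk k) (a : Fin n → Rk k) : Rk k :=
  ∏ i, if a i = ρ then 1 else a i

theorem prod_eq_pow_cnt_mul_rhoFreePart (ρ : Rk k) (a : Fin n → Rk k) :
    ∏ i, a i = ρ ^ cnt ρ a * rhoFreePart ρ a := by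
  classical
  rw [rhoFreePart, cnt, Nat.card_eq_fintype_card, Fintype.card_subtype, ← Finset.prod_const,
    Finset.prod_filter, ← Finset.prod_mul_distrib]
  refine Finset.prod_congr rfl fun i _ => ?_
  split_ifs with h <;> simp [h]

theorem not_dvd_rhoFreePart (hρ : Prime ρ) (hρ1 : ρ.IsHomogeneous 1) {a : Fin n → Rk k}
    (ha : ∀ i, IsLinearForm (a i)) : ¬ ρ ∣ rhoFreePart ρ a := by
  intro h
  obtain ⟨i, -, hi⟩ := hρ.exists_mem_finset_dvd h
  split_ifs at hi with h'
  · exact hρ.not_dvd_one hi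
  · exact h' ((ha i).dvd_iff_eq hρ1 |>.mp hi)

theorem cnt_le (ρ : Rk k) (a : Fin n → Rk k) : cnt ρ a ≤ n :=
  (Finite.card_subtype_le _).trans (Nat.card_fin n).le

theorem CongMod.dvd_aeval_sub {a b : Fin n → Rk k} (h : CongMod ρ a b)
    {f : MvPolynomial (Fin n) (ZMod 2)} (hf : f.IsSymmetric) : ρ ∣ aeval a f - aeval b f := by
  obtain ⟨π, hπ⟩ := h
  let q := Ideal.Quotient.mkₐ (ZMod 2) (Ideal.span {ρ})
  have hab : (fun i => q (a i)) = (fun i => q (b i)) ∘ π :=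
    funext fun i => Ideal.Quotient.mk_span_singleton_eq_iff.mpr (hπ i)
  rw [← Ideal.Quotient.mk_span_singleton_eq_iff, ← Ideal.Quotient.mkₐ_eq_mk (ZMod 2),
    comp_aeval_apply, comp_aeval_apply, hab, ← aeval_rename, hf π]

theorem CongMod.cnt_eq (hρ1 : ρ.IsHomogeneous 1) {a b : Fin n → Rk k}
    (ha : ∀ i, IsLinearForm (a i)) (hb : ∀ i, IsLinearForm (b i)) (h : CongMod ρ a b) :
    cnt ρ a = cnt ρ b :=
  let ⟨π, hπ⟩ := h
  Nat.card_congr (π.subtypeEquiv fun i => (ha i).eq_iff_eq_of_dvd_sub hρ1 (hb (π i)) (hπ i))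

theorem CongMod.dvd_rhoFreePart_sub (hρ1 : ρ.IsHomogeneous 1) {a b : Fin n → Rk k}
    (ha : ∀ i, IsLinearForm (a i)) (hb : ∀ i, IsLinearForm (b i)) (h : CongMod ρ a b) :
    ρ ∣ rhoFreePart ρ a - rhoFreePart ρ b := by
  obtain ⟨π, hπ⟩ := h
  rw [← Ideal.Quotient.mk_span_singleton_eq_iff, rhoFreePart, rhoFreePart, map_prod, map_prod]
  conv_rhs => rw [← Equiv.prod_comp π]
  refine Finset.prod_congr rfl fun i _ => ?_
  have hiff := (ha i).eq_iff_eq_of_dvd_sub hρ1 (hb (π i)) (hπ i)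
  by_cases hbi : b (π i) = ρ
  · simp [hbi, hiff.mpr hbi]
  · simp [hbi, mt hiff.mp hbi, Ideal.Quotient.mk_span_singleton_eq_iff.mpr (hπ i)]

theorem congMod_of_forall_dvd_aeval_esymm_sub (hρ : Prime ρ) {a b : Fin n → Rk k}
    (h : ∀ r, ρ ∣ aeval a (esymm (Fin n) (ZMod 2) r) - aeval b (esymm (Fin n) (ZMod 2) r)) :
    CongMod ρ a b := by
  have := (Ideal.span_singleton_prime hρ.ne_zero).mpr hρ
  let q := Ideal.Quotient.mkₐ (ZMod 2) (Ideal.span {ρ})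
  obtain ⟨π, hπ⟩ :=
    exists_perm_of_esymm_map_eq (a := fun i => q (a i)) (b := fun i => q (b i)) fun r => by
      have := Ideal.Quotient.mk_span_singleton_eq_iff.mpr (h r)
      rwa [← Ideal.Quotient.mkₐ_eq_mk (ZMod 2), comp_aeval_apply, comp_aeval_apply,
        aeval_esymm_eq_multiset_esymm, aeval_esymm_eq_multiset_esymm] at this
  exact ⟨π, fun i => Ideal.Quotient.mk_span_singleton_eq_iff.mp (hπ i)⟩

end LinearForms

section Families

variable {k n : ℕ} {ρ : Rk k} (hρ : Prime ρ) (hρ1 : ρ.IsHomogeneous 1)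
  {V : Type} [Fintype V] {A : V → Fin n → Rk k}

def familySum (A : V → Fin n → Rk k) (f : MvPolynomial (Fin n) (ZMod 2)) : Kk k :=
  ∑ p, toK k (aeval (A p) f) / toK k (∏ i, A p i)

theorem rhoDivisible_iff_forall_familySum_mem :
    RhoDivisible ρ A ↔
      ∀ f : MvPolynomial (Fin n) (ZMod 2), f.IsSymmetric →
        familySum A f ∈ primeLocalization (Kk k) hρ := by
  simp only [RhoDivisible, familySum, mem_primeLocalization]
  rfl

theorem familySum_sigma {ι : Type} [Fintype ι] {V : ι → Type} [∀ i, Fintype (V i)]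
    (A : (i : ι) → V i → Fin n → Rk k) (f : MvPolynomial (Fin n) (ZMod 2)) :
    familySum (fun x : Σ i, V i => A x.1 x.2) f = ∑ i, familySum (A i) f :=
  Fintype.sum_sigma _

include hρ1

theorem familySum_mem_of_valence_zero (hc : Cellular ρ 0 A)
    (f : MvPolynomial (Fin n) (ZMod 2)) : familySum A f ∈ primeLocalization (Kk k) hρ := by
  obtain ⟨-, hlin, hcnt, -⟩ := hc
  refine sum_mem fun p _ => ?_
  rw [prod_eq_pow_cnt_mul_rhoFreePart ρ (A p), hcnt p, pow_zero, one_mul]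
  exact div_mem_primeLocalization hρ _ (not_dvd_rhoFreePart hρ hρ1 (hlin p))

theorem familySum_mem_of_valence_one (hc : Cellular ρ 1 A) (hV : Fintype.card V = 2)
    {f : MvPolynomial (Fin n) (ZMod 2)} (hf : f.IsSymmetric) :
    familySum A f ∈ primeLocalization (Kk k) hρ := by
  classical
  obtain ⟨x, y, hxy, huniv⟩ := Finset.card_eq_two.mp hV
  obtain ⟨-, hlin, hcnt, hcong⟩ := hc
  obtain ⟨c₁, hc₁⟩ := (hcong x y).dvd_aeval_sub hf
  obtain ⟨c₂, hc₂⟩ := (hcong x y).dvd_rhoFreePart_sub hρ1 (hlin x) (hlin y)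
  have hu := not_dvd_rhoFreePart hρ hρ1 (hlin x)
  have hv := not_dvd_rhoFreePart hρ hρ1 (hlin y)
  have hx := prod_eq_pow_cnt_mul_rhoFreePart ρ (A x)
  have hy := prod_eq_pow_cnt_mul_rhoFreePart ρ (A y)
  rw [hcnt, pow_one] at hx hy
  generalize rhoFreePart ρ (A x) = u at hu hx hc₂
  generalize rhoFreePart ρ (A y) = v at hv hy hc₂
  -- both poles are simple and their residues agree mod `ρ`, so they cancel in characteristic 2
  have hnum : aeval (A x) f * v + aeval (A y) f * u = ρ * (c₁ * v + aeval (A y) f * c₂) := by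
    linear_combination
      v * hc₁ + aeval (A y) f * hc₂ + CharTwo.add_self_eq_zero (aeval (A y) f * v)
  have hne : ∀ {s : Rk k}, s ≠ 0 → toK k s ≠ 0 :=
    (map_ne_zero_iff _ (IsFractionRing.injective _ _)).mpr
  have : familySum A f = toK k (ρ * (c₁ * v + aeval (A y) f * c₂)) / toK k (ρ * (u * v)) := by
    rw [familySum, huniv, Finset.sum_pair hxy, hx, hy, ← hnum]
    simp only [map_mul, map_add]
    field_simp [hne hρ.ne_zero, hne (ne_zero_of_not_dvd hu), hne (ne_zero_of_not_dvd hv)]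
  rw [this]
  exact mul_div_mul_mem_primeLocalization hρ hρ.ne_zero _ fun h => (hρ.dvd_or_dvd h).elim hu hv

theorem familySum_pow_mul_sub_mem {ν : ℕ} (hc : Cellular ρ ν A) (q : V)
    {G : MvPolynomial (Fin n) (ZMod 2)} (hG : G.IsSymmetric)
    (f : MvPolynomial (Fin n) (ZMod 2)) :
    familySum A (G ^ 2 ^ n * f) - toK k (aeval (A q) G) ^ 2 ^ n * familySum A f ∈
      primeLocalization (Kk k) hρ := by
  obtain ⟨-, hlin, hcnt, hcong⟩ := hc
  rw [familySum, familySum, Finset.mul_sum, ← Finset.sum_sub_distrib]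
  refine sum_mem fun p _ => ?_
  obtain ⟨d, hd⟩ := (hcong p q).dvd_aeval_sub hG
  have hν : ν ≤ 2 ^ n := hcnt p ▸ (cnt_le ρ (A p)).trans n.lt_two_pow_self.le
  -- Frobenius: `G(A_p)^(2^n) - G(A_q)^(2^n) = (G(A_p) - G(A_q))^(2^n)` is divisible by `ρ^(2^n)`
  have hnum : aeval (A p) (G ^ 2 ^ n * f) - aeval (A q) G ^ 2 ^ n * aeval (A p) f
      = ρ ^ ν * (ρ ^ (2 ^ n - ν) * d ^ 2 ^ n * aeval (A p) f) := by
    rw [map_mul, map_pow, ← sub_mul, ← sub_pow_char_pow, hd, mul_pow, ← mul_assoc, ← mul_assoc,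
      ← pow_add, Nat.add_sub_cancel' hν]
  have : toK k (aeval (A p) (G ^ 2 ^ n * f)) / toK k (∏ i, A p i)
      - toK k (aeval (A q) G) ^ 2 ^ n * (toK k (aeval (A p) f) / toK k (∏ i, A p i))
      = toK k (ρ ^ ν * (ρ ^ (2 ^ n - ν) * d ^ 2 ^ n * aeval (A p) f))
        / toK k (ρ ^ ν * rhoFreePart ρ (A p)) := by
    rw [← hnum, ← hcnt p, ← prod_eq_pow_cnt_mul_rhoFreePart, map_sub, sub_div]
    simp only [map_mul, map_pow, mul_div_assoc]
  rw [this]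
  exact mul_div_mul_mem_primeLocalization hρ (pow_ne_zero _ hρ.ne_zero) _
    (not_dvd_rhoFreePart hρ hρ1 (hlin p))

theorem familySum_mem_of_valence_le_one_or_isEmpty {ν : ℕ} (hc : Cellular ρ ν A)
    (hsmall : ν ≤ 1 ∨ IsEmpty V) (hV : ν = 1 → Fintype.card V = 2)
    {f : MvPolynomial (Fin n) (ZMod 2)} (hf : f.IsSymmetric) :
    familySum A f ∈ primeLocalization (Kk k) hρ := by
  rcases hsmall with hν | hV₀
  · interval_cases ν
    · exact familySum_mem_of_valence_zero hρ hρ1 hc f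
    · exact familySum_mem_of_valence_one hρ hρ1 hc (hV rfl) hf
  · simp [familySum]

theorem Cellular.eq_of_congMod {ν ν' : ℕ} {V' : Type} [Fintype V'] {A' : V' → Fin n → Rk k}
    (hc : Cellular ρ ν A) (hc' : Cellular ρ ν' A') {p : V} {q : V'}
    (h : CongMod ρ (A p) (A' q)) : ν = ν' := by
  obtain ⟨-, hlin, hcnt, -⟩ := hc
  obtain ⟨-, hlin', hcnt', -⟩ := hc'
  rw [← hcnt p, ← hcnt' q]
  exact h.cnt_eq hρ1 (hlin p) (hlin' q)

end Families

section Combination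

variable {k n : ℕ} {ρ : Rk k} (hρ : Prime ρ) (hρ1 : ρ.IsHomogeneous 1)

def evalPowHom (a : Fin n → Rk k) : symmetricSubalgebra (Fin n) (ZMod 2) →* Kk k where
  toFun G := toK k (aeval a (G : MvPolynomial (Fin n) (ZMod 2))) ^ 2 ^ n
  map_one' := by simp
  map_mul' G H := by simp [mul_pow]

theorem evalPowHom_apply (a : Fin n → Rk k) (G : symmetricSubalgebra (Fin n) (ZMod 2)) :
    evalPowHom a G = toK k (aeval a (G : MvPolynomial (Fin n) (ZMod 2))) ^ 2 ^ n :=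
  rfl

theorem evalPowHom_mem (a : Fin n → Rk k) (G : symmetricSubalgebra (Fin n) (ZMod 2)) :
    evalPowHom a G ∈ primeLocalization (Kk k) hρ := by
  rw [evalPowHom_apply, ← map_pow]
  exact Subalgebra.algebraMap_mem _ _

theorem exists_evalPowHom_sub_mul_eq_one {a b : Fin n → Rk k} (h : ¬ CongMod ρ a b) :
    ∃ G, ∃ u ∈ primeLocalization (Kk k) hρ, (evalPowHom a G - evalPowHom b G) * u = 1 := by
  obtain ⟨r, hr⟩ :
      ∃ r, ¬ ρ ∣ aeval a (esymm (Fin n) (ZMod 2) r) - aeval b (esymm (Fin n) (ZMod 2) r) := by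
    by_contra! h'
    exact h (congMod_of_forall_dvd_aeval_esymm_sub hρ h')
  have hd : ¬ ρ ∣ (aeval a (esymm (Fin n) (ZMod 2) r)
      - aeval b (esymm (Fin n) (ZMod 2) r)) ^ 2 ^ n := fun h' => hr (hρ.dvd_of_dvd_pow h')
  refine ⟨⟨_, (mem_symmetricSubalgebra _).mpr (esymm_isSymmetric _ _ r)⟩, toK k 1 / toK k _,
    div_mem_primeLocalization hρ 1 hd, ?_⟩
  rw [evalPowHom_apply, evalPowHom_apply, ← map_pow (toK k), ← map_pow (toK k), ← map_sub,
    ← sub_pow_char_pow, map_one, mul_one_div, div_self]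
  exact (map_ne_zero_iff _ (IsFractionRing.injective _ _)).mpr (ne_zero_of_not_dvd hd)

variable {ι : Type} [Fintype ι] {V : ι → Type} [∀ i, Fintype (V i)] {ν : ι → ℕ}
  {A : (i : ι) → V i → Fin n → Rk k}

include hρ1 in
theorem sum_evalPowHom_mul_familySum_mem (hcell : ∀ i, Cellular ρ (ν i) (A i))
    (q : (i : ι) → V i)
    (hsum : ∀ F : MvPolynomial (Fin n) (ZMod 2), F.IsSymmetric →
      ∑ i, familySum (A i) F ∈ primeLocalization (Kk k) hρ)
    {f : MvPolynomial (Fin n) (ZMod 2)} (hf : f.IsSymmetric)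
    (G : symmetricSubalgebra (Fin n) (ZMod 2)) :
    ∑ i, evalPowHom (A i (q i)) G * familySum (A i) f ∈ primeLocalization (Kk k) hρ := by
  have hG := (mem_symmetricSubalgebra _).mp G.2
  have hGf : ((G : MvPolynomial (Fin n) (ZMod 2)) ^ 2 ^ n * f).IsSymmetric :=
    ((mem_symmetricSubalgebra _).mp (pow_mem G.2 _)).mul hf
  have := sub_mem (hsum _ hGf)
    (sum_mem (t := Finset.univ) fun i _ => familySum_pow_mul_sub_mem hρ hρ1 (hcell i) (q i) hG f)
  simpa only [evalPowHom_apply, ← Finset.sum_sub_distrib, sub_sub_cancel] using this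

include hρ1 in
theorem familySum_mem_of_sum_familySum_mem (hcell : ∀ i, Cellular ρ (ν i) (A i))
    (ha : ∀ i, ν i = 1 → Fintype.card (V i) = 2)
    (hb : ∀ i j, i ≠ j → ν i = ν j → 1 < ν i → ∀ (p : V i) (q : V j), ¬ CongMod ρ (A i p) (A j q))
    (hsum : ∀ F : MvPolynomial (Fin n) (ZMod 2), F.IsSymmetric →
      ∑ i, familySum (A i) F ∈ primeLocalization (Kk k) hρ)
    (i : ι) {f : MvPolynomial (Fin n) (ZMod 2)} (hf : f.IsSymmetric) :
    familySum (A i) f ∈ primeLocalization (Kk k) hρ := by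
  classical
  have hsmall : ∀ j, ¬ (1 < ν j ∧ Nonempty (V j)) → ∀ F : MvPolynomial (Fin n) (ZMod 2),
      F.IsSymmetric → familySum (A j) F ∈ primeLocalization (Kk k) hρ := fun j hj _ hF =>
    familySum_mem_of_valence_le_one_or_isEmpty hρ hρ1 (hcell j)
      (by rwa [not_and_or, not_lt, not_nonempty_iff] at hj) (ha j) hF
  by_cases hi : 1 < ν i ∧ Nonempty (V i)
  swap
  · exact hsmall i hi f hf
  let L := {j // 1 < ν j ∧ Nonempty (V j)}
  have hlarge : ∀ F : MvPolynomial (Fin n) (ZMod 2), F.IsSymmetric →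
      ∑ j : L, familySum (A j) F ∈ primeLocalization (Kk k) hρ := fun F hF =>
    sum_subtype_mem_of_sum_mem _ (hsum F hF) fun j hj => hsmall j hj F hF
  let q (j : L) : V j := Classical.choice j.2.2
  refine mem_of_forall_sum_mul_mem (fun j : L => evalPowHom (A j (q j)))
    (fun j => evalPowHom_mem hρ _) Finset.univ
    (fun j _ j' _ hjj' => exists_evalPowHom_sub_mul_eq_one hρ fun hcong =>
      hb j j' (Subtype.coe_ne_coe.mpr hjj') ((hcell j).eq_of_congMod hρ1 (hcell j') hcong) j.2.1
        _ _ hcong)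
    (fun j : L => familySum (A j) f)
    (sum_evalPowHom_mul_familySum_mem hρ hρ1 (A := fun j : L => A j) (fun j => hcell j) q hlarge hf)
    ⟨i, hi⟩ (Finset.mem_univ _)

end Combination

theorem stmt_10_general (k n : ℕ)
    (ρ : Rk k) (hρ0 : ρ ≠ 0) (hρ1 : ρ.IsHomogeneous 1)
    (m : ℕ) (V : Fin m → Type) [∀ i, Fintype (V i)]
    (nn : Fin m → ℕ) (A : (i : Fin m) → V i → Fin n → Rk k)
    (hcell : ∀ i, Cellular ρ (nn i) (A i))
    (ha : ∀ i, nn i = 1 → Fintype.card (V i) = 2)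
    (hb : ∀ i j, i ≠ j → nn i = nn j → 1 < nn i →
      ∀ (p : V i) (q : V j), ¬ CongMod ρ (A i p) (A j q)) :
    RhoDivisible ρ (fun x : Σ i, V i => A x.1 x.2) ↔
      ∀ i, RhoDivisible ρ (A i) := by
  have hρ := prime_of_isHomogeneous_one_s10 hρ0 hρ1
  simp only [rhoDivisible_iff_forall_familySum_mem hρ, familySum_sigma]
  exact ⟨fun h i _ hf => familySum_mem_of_sum_familySum_mem hρ hρ1 hcell ha hb h i hf,
    fun h f hf => sum_mem fun i _ => h i f hf⟩

/-- given finitely many `ρ`-cellular families `F₁, …, F_m` of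
valences `n₁, …, n_m` with pairwise disjoint index sets such that (a) families of
valence 1 have exactly two members, and (b) members of distinct families of equal
valence `> 1` are never congruent mod `ρ`, the combined family is `ρ`-divisible
iff each family is `ρ`-divisible. -/
theorem stmt_10 (k n : ℕ) (hk : 1 ≤ k) (hn : 1 ≤ n)
    (ρ : Rk k) (hρ0 : ρ ≠ 0) (hρ1 : ρ.IsHomogeneous 1)
    (m : ℕ) (V : Fin m → Type) [∀ i, Fintype (V i)]
    (nn : Fin m → ℕ) (A : (i : Fin m) → V i → Fin n → Rk k)
    (hcell : ∀ i, Cellular ρ (nn i) (A i))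
    (ha : ∀ i, nn i = 1 → Fintype.card (V i) = 2)
    (hb : ∀ i j, i ≠ j → nn i = nn j → 1 < nn i →
      ∀ (p : V i) (q : V j), ¬ CongMod ρ (A i p) (A j q)) :
    RhoDivisible ρ (fun x : Σ i, V i => A x.1 x.2) ↔
      ∀ i, RhoDivisible ρ (A i) :=
  stmt_10_general k n ρ hρ0 hρ1 m V nn A hcell ha hb

end
end

section
/- In R = 𝔽₂[t₁,t₂,t₃], write ρ_a = Σ_{i∈a} t_i for nonempty a ⊆ {1,2,3}. Consider the four quadruples A₁ = (ρ₁, ρ₂, ρ₃, ρ₁₂₃), A₂ = (ρ₁, ρ₁₂, ρ₂₃, ρ₃), A₃ = (ρ₁, ρ₂, ρ₁₃, ρ₂₃), A₄ = (ρ₁, ρ₁₂, ρ₁₃, ρ₁₂₃). Then for every symmetric polynomial f over 𝔽₂ in 4 variables, the element Σ_{i=1}^{4} f(A_i)/σ₄(A_i) of the field of fractions K of R lies in the image of R in K. -/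
/-!
Put the four terms over the common denominator `L = ∏_{a ≠ ∅} ρ_a`; the numerator is
`N = ∑_q f(A_q) · c_q`, where `c_q = L / σ₄(A_q)` is the product of the `ρ_b` missing from
`A_q`. The `ρ_a` are pairwise non-associated irreducibles, so it suffices that every `ρ_a`
divides `N`. Modulo `ρ_a` we have `ρ_b ≡ ρ_{b ∆ a}` (characteristic 2), so, `f` being
symmetric, each term is determined modulo `ρ_a` by the multisets of reductions of `A_q` and of
the factors of `c_q`. Terms with `ρ_a ∤ σ₄(A_q)` vanish since then `ρ_a ∣ c_q`; the others
fall into classes of even size with equal reductions, which cancel in characteristic 2. For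
the four quadruples this last condition is a finite check.
-/

open MvPolynomial

noncomputable section

/-- The polynomial ring `R = 𝔽₂[t₁,t₂,t₃]`. -/
abbrev R3 : Type := MvPolynomial (Fin 3) (ZMod 2)

/-- The field of fractions `K` of `R`. -/
abbrev K3 : Type := FractionRing R3

/-- The canonical map `R → K`. -/
def toK3 : R3 →+* K3 := algebraMap _ _

/-- `ρ₁ = t₁`. -/ def r1 : R3 := X 0
/-- `ρ₂ = t₂`. -/ def r2 : R3 := X 1
/-- `ρ₃ = t₃`. -/ def r3 : R3 := X 2
/-- `ρ₁₂ = t₁ + t₂`. -/ def r12 : R3 := X 0 + X 1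
/-- `ρ₁₃ = t₁ + t₃`. -/ def r13 : R3 := X 0 + X 2
/-- `ρ₂₃ = t₂ + t₃`. -/ def r23 : R3 := X 1 + X 2
/-- `ρ₁₂₃ = t₁ + t₂ + t₃`. -/ def r123 : R3 := X 0 + X 1 + X 2

/-- The localization term `f(A)/σ₄(A)` in `K` attached to a quadruple `A` of
elements of `R` and a polynomial `f` in 4 variables over `𝔽₂`. -/
def trm (A : Fin 4 → R3) (f : MvPolynomial (Fin 4) (ZMod 2)) : K3 :=
  toK3 (aeval A f) / toK3 (∏ i, A i)

open Finset

theorem Fintype.sum_eq_zero_of_even_card_fiber {ι κ M : Type*} [Fintype ι] [DecidableEq κ]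
    [AddCommMonoid M] (hM : ∀ x : M, x + x = 0) (key : ι → κ) (v : ι → M)
    (hv : ∀ i j, key i = key j → v i = v j)
    (heven : ∀ i, v i = 0 ∨ Even #{j | key j = key i}) : ∑ i, v i = 0 := by
  rw [← sum_fiberwise_of_maps_to (t := univ.image key) fun i _ =>
    mem_image_of_mem key (mem_univ i)]
  refine Finset.sum_eq_zero fun c hc => ?_
  obtain ⟨i, -, rfl⟩ := mem_image.mp hc
  have hconst : ∑ j with key j = key i, v j = #{j | key j = key i} • v i :=
    Finset.sum_eq_card_nsmul fun j hj => hv j i (mem_filter.mp hj).2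
  rcases heven i with hi | ⟨m, hm⟩
  · rw [hconst, hi, smul_zero]
  · rw [hconst, hm, add_nsmul, ← nsmul_add, hM, smul_zero]

namespace MvPolynomial

variable {σ k : Type*}

/-- The linear form `ρ_a = ∑_{i ∈ a} t_i`. -/
def sumX [CommSemiring k] (a : Finset σ) : MvPolynomial σ k := ∑ i ∈ a, X i

theorem irreducible_sumX [CommRing k] [IsDomain k] {a : Finset σ} (ha : a.Nonempty) :
    Irreducible (sumX a : MvPolynomial σ k) := by
  classical
  obtain ⟨i, hi⟩ := ha
  have hc : (∑ j ∈ a, Finsupp.single j (1 : k)) i = 1 := by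
    simp [Finsupp.finsetSum_apply, Finsupp.single_apply, hi]
  have hsum : sumX a = sumSMulX (∑ j ∈ a, Finsupp.single j (1 : k)) := by
    simp [sumX, sumSMulX, Finsupp.linearCombination_single]
  rw [hsum]
  refine irreducible_sumSMulX _ ⟨i, by simp [hc]⟩ fun r hr => isUnit_of_dvd_one ?_
  simpa [hc] using hr i

theorem not_sumX_dvd_sumX [CommSemiring k] [Nontrivial k] {a b : Finset σ} {i : σ}
    (hib : i ∈ b) (hia : i ∉ a) : ¬ (sumX a : MvPolynomial σ k) ∣ sumX b := by
  classical
  rintro ⟨c, hc⟩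
  have := congrArg (eval (Pi.single i 1)) hc
  simp [sumX, Finset.sum_pi_single', hib, hia] at this

theorem isRelPrime_sumX [CommRing k] [IsDomain k] {a b : Finset σ} (ha : a.Nonempty)
    (hb : b.Nonempty) (hab : a ≠ b) : IsRelPrime (sumX a : MvPolynomial σ k) (sumX b) := by
  refine (irreducible_sumX ha).isRelPrime_iff_not_dvd.mpr fun hdvd => ?_
  by_cases hba : b ⊆ a
  · obtain ⟨i, hia, hib⟩ := exists_of_ssubset (hba.ssubset_of_ne hab.symm)
    exact not_sumX_dvd_sumX hia hib ((irreducible_sumX ha).dvd_symm (irreducible_sumX hb) hdvd)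
  · obtain ⟨i, hib, hia⟩ := not_subset.mp hba
    exact not_sumX_dvd_sumX hib hia hdvd

theorem IsSymmetric.aeval_eq_of_map_eq [CommRing k] [Fintype σ] {S : Type*} [CommSemiring S]
    [Algebra k S] {f : MvPolynomial σ k} (hf : f.IsSymmetric) {x y : σ → S}
    (h : univ.val.map x = univ.val.map y) : aeval x f = aeval y f := by
  obtain ⟨g, hg⟩ := esymmAlgHom_surjective k (n := Fintype.card σ) le_rfl ⟨f, hf⟩
  have hfg : f = aeval (fun i : Fin _ => esymm σ k (i + 1)) g := by
    rw [← esymmAlgHom_apply, hg]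
  simp only [hfg, comp_aeval_apply, aeval_esymm_eq_multiset_esymm, h]

section Reduction

variable [DecidableEq σ]

/-- A representative of `b` modulo `a` in the group `(Finset σ, ∆)`, canonical once `i ∈ a`. -/
def reduceMod (a : Finset σ) (i : σ) (b : Finset σ) : Finset σ :=
  if i ∈ b then symmDiff b a else b

variable [CommRing k] [CharP k 2]

theorem sumX_symmDiff (a b : Finset σ) :
    (sumX (symmDiff a b) : MvPolynomial σ k) = sumX a + sumX b := by
  have hunion := sum_union_inter (s₁ := a) (s₂ := b) (f := (X : σ → MvPolynomial σ k))
  have hsdiff :=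
    sum_sdiff (f := (X : σ → MvPolynomial σ k)) (inter_subset_union (s := a) (t := b))
  rw [sumX, symmDiff_eq_sup_sdiff_inf, sumX, sumX]
  linear_combination hunion + hsdiff -
    CharTwo.add_self_eq_zero (∑ i ∈ a ∩ b, (X i : MvPolynomial σ k))

theorem mk_sumX_reduceMod (a : Finset σ) (i : σ) (b : Finset σ) :
    Ideal.Quotient.mk (Ideal.span {sumX a}) (sumX (reduceMod a i b) : MvPolynomial σ k) =
      Ideal.Quotient.mk _ (sumX b) := by
  unfold reduceMod
  split_ifs
  · rw [sumX_symmDiff, map_add, Ideal.Quotient.mk_singleton_self, add_zero]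
  · rfl

variable {a : Finset σ} {i : σ}

theorem mk_aeval_sumX_eq_of_map_reduceMod_eq [Fintype σ] {n : ℕ} {f : MvPolynomial (Fin n) k}
    (hf : f.IsSymmetric) {A B : Fin n → Finset σ}
    (h : univ.val.map (reduceMod a i ∘ A) = univ.val.map (reduceMod a i ∘ B)) :
    Ideal.Quotient.mk (Ideal.span {sumX a})
        (aeval (fun m => (sumX (A m) : MvPolynomial σ k)) f) =
      Ideal.Quotient.mk _ (aeval (fun m => sumX (B m)) f) := by
  have hred (C : Fin n → Finset σ) :
      Ideal.Quotient.mk (Ideal.span {sumX a})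
          (aeval (fun m => (sumX (C m) : MvPolynomial σ k)) f) =
        aeval ((fun b => Ideal.Quotient.mkₐ k _ (sumX b)) ∘ (reduceMod a i ∘ C)) f := by
    rw [← Ideal.Quotient.mkₐ_eq_mk k, comp_aeval_apply]
    congr 2
    funext m
    simp only [Function.comp_apply, Ideal.Quotient.mkₐ_eq_mk, mk_sumX_reduceMod]
  rw [hred, hred]
  exact hf.aeval_eq_of_map_eq (by rw [← Multiset.map_map, h, Multiset.map_map])

theorem mk_prod_sumX_eq_of_map_reduceMod_eq {s t : Finset (Finset σ)}
    (h : s.val.map (reduceMod a i) = t.val.map (reduceMod a i)) :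
    Ideal.Quotient.mk (Ideal.span {sumX a}) (∏ b ∈ s, (sumX b : MvPolynomial σ k)) =
      Ideal.Quotient.mk _ (∏ b ∈ t, sumX b) := by
  have hred (u : Finset (Finset σ)) :
      Ideal.Quotient.mk (Ideal.span {sumX a}) (∏ b ∈ u, (sumX b : MvPolynomial σ k)) =
        ((u.val.map (reduceMod a i)).map fun b => Ideal.Quotient.mk _ (sumX b)).prod := by
    rw [map_prod, Multiset.map_map, prod_eq_multiset_prod]
    exact congrArg _ (Multiset.map_congr rfl fun b _ => (mk_sumX_reduceMod a i b).symm)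
  rw [hred, hred, h]

end Reduction

section Quadruples

variable [DecidableEq σ] [Fintype σ] {n : ℕ} {ι : Type*} [Fintype ι]

def cofactors (A : Fin n → Finset σ) : Finset (Finset σ) :=
  univ.filter (fun b : Finset σ => b.Nonempty) \ univ.image A

theorem prod_sumX_mul_prod_cofactors [CommSemiring k] {A : Fin n → Finset σ}
    (hA : Function.Injective A) (hne : ∀ m, (A m).Nonempty) :
    (∏ m, (sumX (A m) : MvPolynomial σ k)) * ∏ b ∈ cofactors A, sumX b =
      ∏ b ∈ univ.filter (fun b : Finset σ => b.Nonempty), sumX b := by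
  rw [← prod_image fun m _ m' _ h => hA h, cofactors, mul_comm, prod_sdiff]
  intro b hb
  obtain ⟨m, -, rfl⟩ := mem_image.mp hb
  exact mem_filter.mpr ⟨mem_univ _, hne m⟩

def reductionKey (a : Finset σ) (i : σ) (A : Fin n → Finset σ) :
    Multiset (Finset σ) × Multiset (Finset σ) :=
  (univ.val.map (reduceMod a i ∘ A), (cofactors A).val.map (reduceMod a i))

/-- The `q` with `ρ_a ∣ ∏ₘ ρ_{Q q m}` fall into classes of even size with the same
reductions modulo `ρ_a`. -/
def ReductionsPairUp (Q : ι → Fin n → Finset σ) (a : Finset σ) : Prop :=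
  ∃ i : σ, ∀ q, a ∉ univ.image (Q q) ∨
    Even #{p | reductionKey a i (Q p) = reductionKey a i (Q q)}

theorem sumX_dvd_sum_aeval_mul_prod_cofactors [CommRing k] [CharP k 2]
    {Q : ι → Fin n → Finset σ} {f : MvPolynomial (Fin n) k} (hf : f.IsSymmetric)
    {a : Finset σ} (ha₀ : a.Nonempty) (ha : ReductionsPairUp Q a) :
    (sumX a : MvPolynomial σ k) ∣
      ∑ q, aeval (fun m => sumX (Q q m)) f * ∏ b ∈ cofactors (Q q), sumX b := by
  obtain ⟨i, hi⟩ := ha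
  rw [← Ideal.Quotient.eq_zero_iff_dvd, map_sum]
  refine Fintype.sum_eq_zero_of_even_card_fiber ?_ (fun q => reductionKey a i (Q q)) _ ?_ ?_
  · intro x
    obtain ⟨y, rfl⟩ := Ideal.Quotient.mk_surjective x
    rw [← map_add, CharTwo.add_self_eq_zero, map_zero]
  · intro p q hpq
    simp only [reductionKey, Prod.mk.injEq] at hpq
    rw [map_mul, map_mul, mk_aeval_sumX_eq_of_map_reduceMod_eq hf hpq.1,
      mk_prod_sumX_eq_of_map_reduceMod_eq hpq.2]
  · intro q
    refine (hi q).imp_left fun haq => ?_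
    have hmem : a ∈ cofactors (Q q) :=
      mem_sdiff.mpr ⟨mem_filter.mpr ⟨mem_univ a, ha₀⟩, haq⟩
    rw [map_mul, (Ideal.Quotient.eq_zero_iff_dvd _ (∏ b ∈ cofactors (Q q), sumX b)).mpr
      (dvd_prod_of_mem _ hmem), mul_zero]

theorem exists_sum_aeval_div_prod_sumX_eq_algebraMap [Field k] [CharP k 2] {K : Type*}
    [Field K] [Algebra (MvPolynomial σ k) K] [IsFractionRing (MvPolynomial σ k) K]
    (Q : ι → Fin n → Finset σ) (hinj : ∀ q, Function.Injective (Q q))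
    (hne : ∀ q m, (Q q m).Nonempty)
    (hpair : ∀ a : Finset σ, a.Nonempty → ReductionsPairUp Q a)
    {f : MvPolynomial (Fin n) k} (hf : f.IsSymmetric) :
    ∃ r : MvPolynomial σ k,
      ∑ q, algebraMap _ K (aeval (fun m => (sumX (Q q m) : MvPolynomial σ k)) f) /
        algebraMap _ K (∏ m, (sumX (Q q m) : MvPolynomial σ k)) = algebraMap _ K r := by
  set L : MvPolynomial σ k := ∏ b ∈ univ.filter (fun b : Finset σ => b.Nonempty), sumX b
  have hL : L ≠ 0 :=
    prod_ne_zero_iff.mpr fun b hb => (irreducible_sumX (mem_filter.mp hb).2).ne_zero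
  have hmap {x : MvPolynomial σ k} (hx : x ≠ 0) : algebraMap _ K x ≠ 0 :=
    (map_ne_zero_iff _ (IsFractionRing.injective _ K)).mpr hx
  obtain ⟨r, hr⟩ :
      L ∣ ∑ q, aeval (fun m => sumX (Q q m)) f * ∏ b ∈ cofactors (Q q), sumX b := by
    refine prod_dvd_of_isRelPrime (fun a ha b hb hab => ?_) fun a ha => ?_
    · exact isRelPrime_sumX (mem_filter.mp ha).2 (mem_filter.mp hb).2 hab
    · have ha₀ := (mem_filter.mp ha).2
      exact sumX_dvd_sum_aeval_mul_prod_cofactors hf ha₀ (hpair a ha₀)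
  refine ⟨r, ?_⟩
  have hfrac {x c d : MvPolynomial σ k} (hdc : d * c = L) :
      algebraMap _ K x / algebraMap _ K d = algebraMap _ K (x * c) / algebraMap _ K L := by
    rw [← hdc, map_mul, map_mul, mul_div_mul_right _ _ (hmap (right_ne_zero_of_mul (hdc ▸ hL)))]
  rw [sum_congr rfl fun q _ => hfrac (prod_sumX_mul_prod_cofactors (hinj q) (hne q)), ← sum_div,
    ← map_sum, hr, map_mul, mul_div_cancel_left₀ _ (hmap hL)]

end Quadruples

end MvPolynomial

/-- `A₁, …, A₄`, the linear form `ρ_a` being recorded as `a`, with `0, 1, 2` standing for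
`t₁, t₂, t₃`. -/
def quadruples : Fin 4 → Fin 4 → Finset (Fin 3) :=
  ![![{0}, {1}, {2}, {0, 1, 2}], ![{0}, {0, 1}, {1, 2}, {2}], ![{0}, {1}, {0, 2}, {1, 2}],
    ![{0}, {0, 1}, {0, 2}, {0, 1, 2}]]

theorem sumX_quadruples (q : Fin 4) :
    (fun m => (sumX (quadruples q m) : R3)) =
      ![![r1, r2, r3, r123], ![r1, r12, r23, r3], ![r1, r2, r13, r23],
        ![r1, r12, r13, r123]] q := by
  funext m
  fin_cases q <;> fin_cases m <;>
    simp [quadruples, sumX, r1, r2, r3, r12, r13, r23, r123, add_assoc]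

/-- for the four quadruples `A₁ = (ρ₁,ρ₂,ρ₃,ρ₁₂₃)`,
`A₂ = (ρ₁,ρ₁₂,ρ₂₃,ρ₃)`, `A₃ = (ρ₁,ρ₂,ρ₁₃,ρ₂₃)`, `A₄ = (ρ₁,ρ₁₂,ρ₁₃,ρ₁₂₃)` and
every symmetric polynomial `f` over `𝔽₂` in 4 variables,
`∑ᵢ f(Aᵢ)/σ₄(Aᵢ)` lies in the image of `R` in `K`. -/
theorem stmt_11 :
    ∀ f : MvPolynomial (Fin 4) (ZMod 2), f.IsSymmetric →
      ∃ r : R3,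
        trm ![r1, r2, r3, r123] f + trm ![r1, r12, r23, r3] f +
          trm ![r1, r2, r13, r23] f + trm ![r1, r12, r13, r123] f = toK3 r := by
  intro f hf
  obtain ⟨r, hr⟩ := exists_sum_aeval_div_prod_sumX_eq_algebraMap (K := K3) quadruples
    (by decide) (by decide) (by unfold ReductionsPairUp; decide +kernel) hf
  refine ⟨r, ?_⟩
  simpa [Fin.sum_univ_four, sumX_quadruples, trm, toK3] using hr

end
end

section
/- In R = 𝔽₂[t₁,t₂,t₃], write ρ_a = Σ_{i∈a} t_i for nonempty a ⊆ {1,2,3}. Consider the three quadruples A₁ = (ρ₁, ρ₂, ρ₃, ρ₁₂₃), A₂ = (ρ₁, ρ₁₂, ρ₂₃, ρ₃), A₃ = (ρ₂, ρ₁₂, ρ₂₃, ρ₁₂₃). Then for every symmetric polynomial f over 𝔽₂ in 4 variables, the element Σ_{i=1}^{3} f(A_i)/σ₄(A_i) of the field of fractions K of R lies in the image of R in K. -/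
/-!
Over the common denominator `D = ρ₁ρ₂ρ₃ρ₁₂ρ₂₃ρ₁₂₃` the sum has numerator
`N = ∑ᵢ f(Aᵢ) · D / σ₄(Aᵢ)`. Each of the six linear forms `ℓ` occurs in exactly two of the
quadruples; modulo `ℓ` these two quadruples agree up to order and have equal cofactors, while
the cofactor of the third quadruple is divisible by `ℓ`. As `f` is symmetric and we are in
characteristic 2, the two surviving terms cancel and `ℓ ∣ N`. Reduction modulo `ℓ` is a
substitution into the domain `R` under which the other five forms stay nonzero, so the six
divisibilities combine to `D ∣ N`.
-/

open MvPolynomial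

noncomputable section

namespace MvPolynomial

section CommSemiring

variable {σ R : Type*} [CommSemiring R]

theorem IsSymmetric.aeval_comp_perm {S : Type*} [CommSemiring S] [Algebra R S]
    {f : MvPolynomial σ R} (hf : f.IsSymmetric) (B : σ → S) (e : Equiv.Perm σ) :
    aeval (B ∘ e) f = aeval B f := by
  rw [← aeval_rename, hf e]

theorem X_add_X_ne_zero [Nontrivial R] {i j : σ} (h : i ≠ j) :
    (X i + X j : MvPolynomial σ R) ≠ 0 := by
  classical
  intro h0
  simpa [coeff_X, Finsupp.single_left_inj, Ne.symm h] using
    congrArg (coeff (Finsupp.single i 1)) h0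

end CommSemiring

variable {σ R : Type*} [CommRing R]

theorem dvd_sub_aeval_self {d : MvPolynomial σ R} {g : σ → MvPolynomial σ R}
    (hg : ∀ i, d ∣ X i - g i) (p : MvPolynomial σ R) : d ∣ p - aeval g p := by
  rw [← Ideal.mem_span_singleton, ← Ideal.Quotient.eq]
  have h : (Ideal.Quotient.mkₐ R (Ideal.span {d})).comp (aeval g) =
      Ideal.Quotient.mkₐ R (Ideal.span {d}) := by
    ext i
    simpa [eq_comm] using Ideal.Quotient.eq.mpr (Ideal.mem_span_singleton.mpr (hg i))
  exact (DFunLike.congr_fun h p).symm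

theorem dvd_of_aeval_eq_zero {d : MvPolynomial σ R} {g : σ → MvPolynomial σ R}
    (hg : ∀ i, d ∣ X i - g i) {p : MvPolynomial σ R} (hp : aeval g p = 0) : d ∣ p := by
  have h := dvd_sub_aeval_self hg p
  rwa [hp, sub_zero] at h

variable [DecidableEq σ]

/-- When `ℓ` is `X i` plus terms free of `X i`, this is reduction modulo `ℓ`. -/
def killAt (i : σ) (ℓ : MvPolynomial σ R) : MvPolynomial σ R →ₐ[R] MvPolynomial σ R :=
  aeval (Function.update X i (X i - ℓ))

theorem dvd_of_killAt_eq_zero {i : σ} {ℓ p : MvPolynomial σ R} (hp : killAt i ℓ p = 0) :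
    ℓ ∣ p :=
  dvd_of_aeval_eq_zero (fun j => by rcases eq_or_ne j i with rfl | h <;> simp [*]) hp

theorem mul_dvd_of_killAt_eq_zero [IsDomain R] {i : σ} {ℓ m n : MvPolynomial σ R} (hm : m ∣ n)
    (hn : killAt i ℓ n = 0) (hm' : killAt i ℓ m ≠ 0) : m * ℓ ∣ n := by
  obtain ⟨k, rfl⟩ := hm
  rw [map_mul, mul_eq_zero] at hn
  exact mul_dvd_mul_left m (dvd_of_killAt_eq_zero (hn.resolve_left hm'))

end MvPolynomial

open MvPolynomial

theorem IsFractionRing.exists_sum_div_eq_algebraMap {A K ι : Type*} [CommRing A] [Field K]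
    [Algebra A K] [IsFractionRing A K] (s : Finset ι) {x σ u : ι → A} {D : A} (hD : D ≠ 0)
    (hσ : ∀ i ∈ s, σ i * u i = D) (hdvd : D ∣ ∑ i ∈ s, x i * u i) :
    ∃ r, ∑ i ∈ s, algebraMap A K (x i) / algebraMap A K (σ i) = algebraMap A K r := by
  obtain ⟨r, hr⟩ := hdvd
  have hinj := IsFractionRing.injective A K
  have hD' : algebraMap A K D ≠ 0 := (map_ne_zero_iff _ hinj).mpr hD
  have hterm : ∀ i ∈ s, algebraMap A K (x i) / algebraMap A K (σ i) =
      algebraMap A K (x i * u i) / algebraMap A K D := by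
    intro i hi
    have hu : algebraMap A K (u i) ≠ 0 :=
      (map_ne_zero_iff _ hinj).mpr (right_ne_zero_of_mul (hσ i hi ▸ hD))
    rw [← hσ i hi, map_mul, map_mul, mul_div_mul_right _ _ hu]
  refine ⟨r, ?_⟩
  rw [Finset.sum_congr rfl hterm, ← Finset.sum_div, ← map_sum, hr, map_mul,
    mul_div_cancel_left₀ _ hD']

theorem aeval_pair_add_eq_zero {k A S ι : Type*} [CommRing k] [CommRing A] [Algebra k A]
    [CommRing S] [Algebra k S] [CharP S 2] {f : MvPolynomial ι k} (hf : f.IsSymmetric)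
    (φ : A →ₐ[k] S) {B B' : ι → A} (e : Equiv.Perm ι) (hB : ∀ i, φ (B' i) = φ (B (e i)))
    {u u' w : A} (hu : φ u' = φ u) (hw : φ w = 0) (x : A) :
    φ (aeval B f * u + aeval B' f * u' + x * w) = 0 := by
  have hB' : φ (aeval B' f) = φ (aeval B f) := by
    rw [comp_aeval_apply, comp_aeval_apply,
      show (fun i => φ (B' i)) = (fun i => φ (B i)) ∘ e from funext hB, hf.aeval_comp_perm]
  rw [map_add, map_add, map_mul, map_mul, map_mul, hB', hu, hw, mul_zero, add_zero,
    CharTwo.add_self_eq_zero]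

def quad : Fin 3 → Fin 4 → R3 :=
  ![![r1, r2, r3, r123], ![r1, r12, r23, r3], ![r2, r12, r23, r123]]

def cofactor : Fin 3 → R3 := ![r12 * r23, r2 * r123, r1 * r3]

def denom : R3 := r1 * r2 * r3 * r12 * r23 * r123

def numerator (f : MvPolynomial (Fin 4) (ZMod 2)) : R3 := ∑ a, aeval (quad a) f * cofactor a

theorem prod_quad_mul_cofactor (a : Fin 3) : (∏ i, quad a i) * cofactor a = denom := by
  fin_cases a <;> simp [Fin.prod_univ_four, quad, cofactor, denom] <;> ring

theorem denom_ne_zero : denom ≠ 0 := by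
  have h01 : (X 0 + X 1 : R3) ≠ 0 := X_add_X_ne_zero (by decide)
  have h12 : (X 1 + X 2 : R3) ≠ 0 := X_add_X_ne_zero (by decide)
  have h012 : (X 0 + X 1 + X 2 : R3) ≠ 0 := fun h => by
    absurd congrArg (eval 1) h
    simp only [map_add, eval_X, map_zero, Pi.one_apply]
    decide
  simp [denom, r1, r2, r3, r12, r23, r123, X_ne_zero, h01, h12, h012]

section numerator

variable {f : MvPolynomial (Fin 4) (ZMod 2)} (hf : f.IsSymmetric)
include hf

attribute [local simp] killAt r1 r2 r3 r12 r23 r123 Equiv.swap_apply_def X_ne_zero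

theorem killAt_r1_numerator : killAt 0 r1 (numerator f) = 0 := by
  simp only [numerator, Fin.sum_univ_three]
  refine aeval_pair_add_eq_zero hf _ (Equiv.swap 2 3) (fun i => ?_) ?_ ?_ _
  · fin_cases i <;> simp [quad]
  all_goals simp [cofactor]

theorem killAt_r2_numerator : killAt 1 r2 (numerator f) = 0 := by
  simp only [numerator, Fin.sum_univ_three, add_right_comm _ _ (aeval (quad 2) f * _)]
  refine aeval_pair_add_eq_zero hf _ (Equiv.swap 0 1) (fun i => ?_) ?_ ?_ _
  · fin_cases i <;> simp [quad]
  all_goals simp [cofactor]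

theorem killAt_r3_numerator : killAt 2 r3 (numerator f) = 0 := by
  simp only [numerator, Fin.sum_univ_three]
  refine aeval_pair_add_eq_zero hf _ (Equiv.swap 1 3 * Equiv.swap 2 3) (fun i => ?_) ?_ ?_ _
  · fin_cases i <;> simp [quad]
  all_goals simp [cofactor]
  grind

theorem killAt_r12_numerator : killAt 0 r12 (numerator f) = 0 := by
  simp only [numerator, Fin.sum_univ_three, add_rotate (aeval (quad 0) f * _)]
  refine aeval_pair_add_eq_zero hf _ 1 (fun i => ?_) ?_ ?_ _
  · fin_cases i <;> simp [quad]
    grind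
  all_goals simp [cofactor]
  grind

theorem killAt_r23_numerator : killAt 1 r23 (numerator f) = 0 := by
  simp only [numerator, Fin.sum_univ_three, add_rotate (aeval (quad 0) f * _)]
  refine aeval_pair_add_eq_zero hf _ (Equiv.swap 0 3) (fun i => ?_) ?_ ?_ _
  · fin_cases i <;> simp [quad]
    grind
  all_goals simp [cofactor]
  grind

theorem killAt_r123_numerator : killAt 0 r123 (numerator f) = 0 := by
  simp only [numerator, Fin.sum_univ_three, add_right_comm _ _ (aeval (quad 2) f * _)]
  refine aeval_pair_add_eq_zero hf _ (Equiv.swap 0 1 * Equiv.swap 1 2) (fun i => ?_) ?_ ?_ _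
  · fin_cases i <;> simp [quad] <;> grind
  all_goals simp [cofactor]
  all_goals grind

theorem denom_dvd_numerator : denom ∣ numerator f := by
  have h02 : (X 0 + X 2 : R3) ≠ 0 := X_add_X_ne_zero (by decide)
  have h12 : (X 1 + X 2 : R3) ≠ 0 := X_add_X_ne_zero (by decide)
  have d1 := dvd_of_killAt_eq_zero (killAt_r1_numerator hf)
  have d2 := mul_dvd_of_killAt_eq_zero d1 (killAt_r2_numerator hf) (by simp)
  have d3 := mul_dvd_of_killAt_eq_zero d2 (killAt_r3_numerator hf) (by simp)
  have d4 := mul_dvd_of_killAt_eq_zero d3 (killAt_r12_numerator hf) (by simp)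
  have d5 := mul_dvd_of_killAt_eq_zero d4 (killAt_r23_numerator hf)
    (by simp; grind)
  exact mul_dvd_of_killAt_eq_zero d5 (killAt_r123_numerator hf)
    (by simp; grind [X_ne_zero])

end numerator

/-- for the three quadruples `A₁ = (ρ₁,ρ₂,ρ₃,ρ₁₂₃)`,
`A₂ = (ρ₁,ρ₁₂,ρ₂₃,ρ₃)`, `A₃ = (ρ₂,ρ₁₂,ρ₂₃,ρ₁₂₃)` and every symmetric polynomial
`f` over `𝔽₂` in 4 variables, `∑ᵢ f(Aᵢ)/σ₄(Aᵢ)` lies in the image of `R` in `K`. -/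
theorem stmt_12 :
    ∀ f : MvPolynomial (Fin 4) (ZMod 2), f.IsSymmetric →
      ∃ r : R3,
        trm ![r1, r2, r3, r123] f + trm ![r1, r12, r23, r3] f +
          trm ![r2, r12, r23, r123] f = toK3 r := by
  intro f hf
  obtain ⟨r, hr⟩ := IsFractionRing.exists_sum_div_eq_algebraMap (K := K3) Finset.univ
    denom_ne_zero (fun a _ => prod_quad_mul_cofactor a) (denom_dvd_numerator hf)
  exact ⟨r, by simpa [Fin.sum_univ_three, trm, toK3, quad] using hr⟩

end
end

section
/- Let W = (ZMod 2)³ with standard basis e₁, e₂, e₃, and let P be the polynomial ring over ZMod 2 with one variable X_w for each nonzero w ∈ W (i.e., MvPolynomial {w : W // w ≠ 0} (ZMod 2)). The group of linear automorphisms of W acts on P by algebra automorphisms sending X_w to X_{σ(w)}. Writing X_{i…j} for X_{e_i + ⋯ + e_j}, let Λ₃ = X₁²X₂X₃ + X₁²X₁₂X₃ + X₁²X₂X₁₃ + X₁²X₁₂X₁₃ + X₁X₂X₁₂X₂₃ + X₁X₂X₁₂X₁₂₃ + X₁X₃X₁₃X₂₃ + X₁X₃X₁₃X₁₂₃. Then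 the orbit of Λ₃ under this action has exactly 21 elements. -/
open MvPolynomial

noncomputable section

/-- `W = (ZMod 2)³`. -/
abbrev W3 : Type := Fin 3 → ZMod 2

/-- The polynomial ring over `ZMod 2` with one variable `X_w` for each nonzero
`w ∈ W`. -/
abbrev P3 : Type := MvPolynomial {w : W3 // w ≠ 0} (ZMod 2)

/-- A linear automorphism `σ` of `W` acts on the nonzero vectors of `W`. -/
def actVar (σ : W3 ≃ₗ[ZMod 2] W3) (w : {w : W3 // w ≠ 0}) : {w : W3 // w ≠ 0} :=
  ⟨σ w.1, by simp [LinearEquiv.map_eq_zero_iff, w.2]⟩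

/-- The induced algebra automorphism of `P3`, sending `X_w` to `X_{σ(w)}`. -/
def actP (σ : W3 ≃ₗ[ZMod 2] W3) : P3 →ₐ[ZMod 2] P3 := rename (actVar σ)

/-- `X₁` -/ def X1 : P3 := X ⟨![1, 0, 0], by decide⟩
/-- `X₂` -/ def X2 : P3 := X ⟨![0, 1, 0], by decide⟩
/-- `X₃` -/ def X3 : P3 := X ⟨![0, 0, 1], by decide⟩
/-- `X₁₂` -/ def X12 : P3 := X ⟨![1, 1, 0], by decide⟩
/-- `X₁₃` -/ def X13 : P3 := X ⟨![1, 0, 1], by decide⟩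
/-- `X₂₃` -/ def X23 : P3 := X ⟨![0, 1, 1], by decide⟩
/-- `X₁₂₃` -/ def X123 : P3 := X ⟨![1, 1, 1], by decide⟩

abbrev V3 : Type := {w : W3 // w ≠ 0}

/-- sum of monomials given by a finset of multisets of variables -/
def FP (s : Finset (Multiset V3)) : P3 := ∑ m ∈ s, (m.map X).prod

lemma prod_map_X (m : Multiset V3) :
    ((m.map X).prod : P3) = monomial (Multiset.toFinsupp m) 1 := by
  induction m using Multiset.induction with
  | empty => simp
  | cons a m ih =>
      rw [Multiset.map_cons, Multiset.prod_cons, ih, X, monomial_mul, one_mul]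
      congr 1
      rw [show a ::ₘ m = {a} + m from (Multiset.singleton_add a m).symm, map_add,
        Multiset.toFinsupp_singleton]

lemma FP_inj : Function.Injective FP := by
  intro s t h
  have key : ∀ (u : Finset (Multiset V3)) (m : Multiset V3),
      coeff (Multiset.toFinsupp m) (FP u) = if m ∈ u then 1 else 0 := by
    intro u m
    rw [FP]
    rw [coeff_sum]
    have : ∀ m' ∈ u, coeff (Multiset.toFinsupp m) ((m'.map X).prod : P3)
        = if m' = m then 1 else 0 := by
      intro m' _
      rw [prod_map_X, coeff_monomial]
      congr 1
      simp [eq_iff_iff, Multiset.toFinsupp.injective.eq_iff]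
    rw [Finset.sum_congr rfl this, Finset.sum_ite_eq' u m (fun _ => (1 : ZMod 2))]
  ext m
  have := (key s m).symm.trans ((congrArg (coeff (Multiset.toFinsupp m)) h).trans (key t m))
  by_contra hc
  rcases Decidable.em (m ∈ s) with hs | hs <;> rcases Decidable.em (m ∈ t) with ht | ht <;>
    simp [hs, ht] at this hc ⊢

lemma rename_FP (f : V3 → V3) (hf : Function.Injective f) (s : Finset (Multiset V3)) :
    rename f (FP s) = FP (s.image (Multiset.map f)) := by
  rw [FP, map_sum, FP, Finset.sum_image (fun x _ y _ h => Multiset.map_injective hf h)]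
  refine Finset.sum_congr rfl fun m _ => ?_
  rw [map_multiset_prod, Multiset.map_map, Multiset.map_map]
  congr 1
  simp [Function.comp_def]

def enc (w : W3) : ℕ := (w 0).val + 2 * (w 1).val + 4 * (w 2).val
def dec (n : ℕ) : W3 := ![(n % 2 : ℕ), (n / 2 % 2 : ℕ), (n / 4 % 2 : ℕ)]

lemma dec_enc : ∀ w : W3, dec (enc w) = w := by decide

def N0 : Finset (Multiset ℕ) :=
  { {1,1,2,4}, {1,1,3,4}, {1,1,2,5}, {1,1,3,5},
    {1,2,3,6}, {1,2,3,7}, {1,4,5,6}, {1,4,5,7} }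

def LMP : List (Matrix (Fin 3) (Fin 3) (ZMod 2) × Matrix (Fin 3) (Fin 3) (ZMod 2)) :=
[ (!![1, 0, 0; 0, 1, 0; 0, 0, 1], !![1, 0, 0; 0, 1, 0; 0, 0, 1]),
  (!![0, 0, 1; 0, 1, 0; 1, 0, 0], !![0, 0, 1; 0, 1, 0; 1, 0, 0]),
  (!![0, 0, 1; 0, 1, 1; 1, 0, 0], !![0, 0, 1; 1, 1, 0; 1, 0, 0]),
  (!![0, 0, 1; 1, 0, 0; 0, 1, 0], !![0, 1, 0; 0, 0, 1; 1, 0, 0]),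
  (!![0, 0, 1; 1, 0, 0; 0, 1, 1], !![0, 1, 0; 1, 0, 1; 1, 0, 0]),
  (!![0, 0, 1; 1, 0, 0; 1, 1, 0], !![0, 1, 0; 0, 1, 1; 1, 0, 0]),
  (!![0, 0, 1; 1, 0, 0; 1, 1, 1], !![0, 1, 0; 1, 1, 1; 1, 0, 0]),
  (!![0, 1, 1; 0, 0, 1; 1, 0, 0], !![0, 0, 1; 1, 1, 0; 0, 1, 0]),
  (!![0, 1, 1; 1, 0, 0; 0, 0, 1], !![0, 1, 0; 1, 0, 1; 0, 0, 1]),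
  (!![0, 1, 1; 1, 0, 0; 1, 0, 1], !![0, 1, 0; 1, 1, 1; 0, 1, 1]),
  (!![1, 0, 0; 0, 0, 1; 0, 1, 1], !![1, 0, 0; 0, 1, 1; 0, 1, 0]),
  (!![1, 0, 0; 0, 0, 1; 1, 1, 0], !![1, 0, 0; 1, 0, 1; 0, 1, 0]),
  (!![1, 0, 0; 0, 0, 1; 1, 1, 1], !![1, 0, 0; 1, 1, 1; 0, 1, 0]),
  (!![1, 0, 0; 0, 1, 1; 0, 0, 1], !![1, 0, 0; 0, 1, 1; 0, 0, 1]),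
  (!![1, 0, 0; 0, 1, 1; 1, 0, 1], !![1, 0, 0; 1, 1, 1; 1, 0, 1]),
  (!![1, 0, 0; 1, 0, 1; 0, 1, 0], !![1, 0, 0; 0, 0, 1; 1, 1, 0]),
  (!![1, 0, 0; 1, 0, 1; 0, 1, 1], !![1, 0, 0; 1, 1, 1; 1, 1, 0]),
  (!![1, 0, 0; 1, 0, 1; 1, 1, 0], !![1, 0, 0; 1, 0, 1; 1, 1, 0]),
  (!![1, 0, 0; 1, 0, 1; 1, 1, 1], !![1, 0, 0; 0, 1, 1; 1, 1, 0]),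
  (!![1, 0, 0; 1, 1, 1; 0, 0, 1], !![1, 0, 0; 1, 1, 1; 0, 0, 1]),
  (!![1, 0, 0; 1, 1, 1; 1, 0, 1], !![1, 0, 0; 0, 1, 1; 1, 0, 1]) ]


def matN (A : Matrix (Fin 3) (Fin 3) (ZMod 2)) : ℕ → ℕ := fun n => enc (A.mulVec (dec n))

def LTN : List (Finset (Multiset ℕ)) :=
[ {{1,1,2,4}, {1,1,2,5}, {1,1,3,4}, {1,1,3,5}, {1,2,3,6}, {1,2,3,7}, {1,4,5,6}, {1,4,5,7}},
  {{1,2,4,4}, {1,3,4,5}, {1,4,4,6}, {1,4,5,7}, {2,3,4,6}, {2,4,4,5}, {2,4,6,7}, {4,4,5,6}},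
  {{1,2,4,6}, {1,3,4,7}, {2,3,4,4}, {2,4,4,7}, {2,4,5,6}, {3,4,4,6}, {3,4,5,7}, {4,4,6,7}},
  {{1,2,2,4}, {1,2,2,6}, {1,2,3,5}, {1,2,3,7}, {2,2,3,4}, {2,2,3,6}, {2,4,5,6}, {2,4,6,7}},
  {{1,2,4,6}, {1,2,5,7}, {2,2,4,5}, {2,2,4,7}, {2,2,5,6}, {2,2,6,7}, {2,3,4,6}, {2,3,5,7}},
  {{1,2,6,6}, {1,3,6,7}, {1,4,6,6}, {1,5,6,7}, {2,3,4,6}, {2,4,5,6}, {2,6,6,7}, {4,6,6,7}},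
  {{1,2,4,6}, {1,3,5,6}, {2,3,6,6}, {2,4,6,7}, {2,5,6,6}, {3,4,6,6}, {3,5,6,7}, {4,5,6,6}},
  {{1,2,4,5}, {1,3,4,4}, {1,4,4,7}, {1,4,5,6}, {2,3,4,7}, {3,4,4,5}, {3,4,6,7}, {4,4,5,7}},
  {{1,2,2,5}, {1,2,2,7}, {1,2,3,4}, {1,2,3,6}, {2,2,3,5}, {2,2,3,7}, {2,4,5,7}, {2,5,6,7}},
  {{1,2,6,7}, {1,3,6,6}, {1,4,6,7}, {1,5,6,6}, {2,3,5,6}, {3,4,5,6}, {3,6,6,7}, {5,6,6,7}},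
  {{1,1,4,6}, {1,1,4,7}, {1,1,5,6}, {1,1,5,7}, {1,2,4,5}, {1,2,6,7}, {1,3,4,5}, {1,3,6,7}},
  {{1,2,5,5}, {1,3,4,5}, {1,4,5,6}, {1,5,5,7}, {2,3,5,7}, {2,4,5,5}, {2,5,6,7}, {4,5,5,7}},
  {{1,2,4,5}, {1,3,5,5}, {1,4,5,7}, {1,5,5,6}, {2,3,5,6}, {3,4,5,5}, {3,5,6,7}, {4,5,5,6}},
  {{1,1,2,6}, {1,1,2,7}, {1,1,3,6}, {1,1,3,7}, {1,2,3,4}, {1,2,3,5}, {1,4,6,7}, {1,5,6,7}},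
  {{1,2,5,7}, {1,3,5,6}, {2,3,5,5}, {2,4,5,7}, {2,5,5,6}, {3,4,5,6}, {3,5,5,7}, {5,5,6,7}},
  {{1,2,3,5}, {1,2,3,6}, {1,3,3,4}, {1,3,3,7}, {2,3,3,4}, {2,3,3,7}, {3,4,5,7}, {3,4,6,7}},
  {{1,3,4,7}, {1,3,5,6}, {2,3,4,7}, {2,3,5,6}, {3,3,4,5}, {3,3,4,6}, {3,3,5,7}, {3,3,6,7}},
  {{1,2,5,7}, {1,3,4,7}, {2,3,7,7}, {2,4,7,7}, {2,5,6,7}, {3,4,6,7}, {3,5,7,7}, {4,5,7,7}},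
  {{1,2,6,7}, {1,3,7,7}, {1,4,7,7}, {1,5,6,7}, {2,3,4,7}, {3,4,5,7}, {3,6,7,7}, {4,6,7,7}},
  {{1,2,3,4}, {1,2,3,7}, {1,3,3,5}, {1,3,3,6}, {2,3,3,5}, {2,3,3,6}, {3,4,5,6}, {3,5,6,7}},
  {{1,2,7,7}, {1,3,6,7}, {1,4,6,7}, {1,5,7,7}, {2,3,5,7}, {2,4,5,7}, {2,6,7,7}, {5,6,7,7}} ]

def TN : Finset (Finset (Multiset ℕ)) := LTN.toFinset

set_option maxRecDepth 8000 in
lemma cardTN : TN.card = 21 := by decide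

set_option maxRecDepth 8000 in
lemma N0_mem : N0 ∈ TN := by decide

lemma invLMP : ∀ p ∈ LMP, ∀ v : W3,
    p.1.mulVec (p.2.mulVec v) = v ∧ p.2.mulVec (p.1.mulVec v) = v := by
  intro p hp
  fin_cases hp <;> decide

set_option maxRecDepth 8000 in
set_option maxHeartbeats 3000000 in
lemma himg : LMP.map (fun p => N0.image (Multiset.map (matN p.1))) = LTN := by decide

def tgN (i j : Fin 3) (c : ZMod 2) : ℕ → ℕ :=
  matN (Matrix.transvection i j c)

set_option maxRecDepth 8000 in
set_option maxHeartbeats 4000000 in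
lemma closureTN : ∀ (i j : Fin 3) (c : ZMod 2), i ≠ j →
    ∀ u ∈ TN, u.image (Multiset.map (tgN i j c)) ∈ TN := by decide

def encVFS (s : Finset (Multiset V3)) : Finset (Multiset ℕ) :=
  s.image (Multiset.map (fun w : V3 => enc w.1))

lemma enc_inj : Function.Injective enc := by
  intro a b h
  have := congrArg dec h
  rwa [dec_enc, dec_enc] at this

lemma encVFS_inj : Function.Injective encVFS :=
  Finset.image_injective (Multiset.map_injective
    (fun a b hab => Subtype.ext (enc_inj hab)))

def v1 : V3 := ⟨![1,0,0], by decide⟩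
def v2 : V3 := ⟨![0,1,0], by decide⟩
def v3 : V3 := ⟨![0,0,1], by decide⟩
def v12 : V3 := ⟨![1,1,0], by decide⟩
def v13 : V3 := ⟨![1,0,1], by decide⟩
def v23 : V3 := ⟨![0,1,1], by decide⟩
def v123 : V3 := ⟨![1,1,1], by decide⟩

def M0 : Finset (Multiset V3) :=
  { {v1,v1,v2,v3}, {v1,v1,v12,v3}, {v1,v1,v2,v13}, {v1,v1,v12,v13},
    {v1,v2,v12,v23}, {v1,v2,v12,v123}, {v1,v3,v13,v23}, {v1,v3,v13,v123} }

lemma encVFS_M0 : encVFS M0 = N0 := by decide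

lemma FPM0 : FP M0 = X1 ^ 2 * X2 * X3 + X1 ^ 2 * X12 * X3 + X1 ^ 2 * X2 * X13 +
    X1 ^ 2 * X12 * X13 + X1 * X2 * X12 * X23 + X1 * X2 * X12 * X123 +
    X1 * X3 * X13 * X23 + X1 * X3 * X13 * X123 := by
  rw [FP]
  simp only [M0]
  rw [Finset.sum_insert (by decide), Finset.sum_insert (by decide),
    Finset.sum_insert (by decide), Finset.sum_insert (by decide),
    Finset.sum_insert (by decide), Finset.sum_insert (by decide),
    Finset.sum_insert (by decide), Finset.sum_singleton]
  simp only [Multiset.insert_eq_cons, Multiset.map_cons, Multiset.prod_cons,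
    Multiset.map_singleton, Multiset.prod_singleton]
  simp only [X1, X2, X3, X12, X13, X23, X123, v1, v2, v3, v12, v13, v23, v123]
  ring

lemma encVFS_img (f : V3 → V3) (g : ℕ → ℕ) (h : ∀ w : V3, enc (f w).1 = g (enc w.1))
    (s : Finset (Multiset V3)) :
    encVFS (s.image (Multiset.map f)) = (encVFS s).image (Multiset.map g) := by
  simp only [encVFS, Finset.image_image]
  congr 1
  funext m
  simp only [Function.comp_apply, Multiset.map_map, Function.comp_def, h]

lemma matN_mul (M N : Matrix (Fin 3) (Fin 3) (ZMod 2)) :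
    matN (M * N) = matN M ∘ matN N := by
  funext n
  simp [matN, ← Matrix.mulVec_mulVec, dec_enc]

set_option maxRecDepth 8000 in
lemma matN_one_img : ∀ u ∈ TN, u.image (Multiset.map (matN 1)) = u := by decide

lemma trans_chain (Ls : List (Matrix.TransvectionStruct (Fin 3) (ZMod 2))) :
    ∀ u ∈ TN,
      u.image (Multiset.map (matN ((Ls.map Matrix.TransvectionStruct.toMatrix).prod))) ∈ TN := by
  induction Ls with
  | nil =>
      intro u hu
      rw [List.map_nil, List.prod_nil, matN_one_img u hu]
      exact hu
  | cons t Ls ih =>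
      intro u hu
      have hsplit : u.image (Multiset.map (matN (t.toMatrix *
          (Ls.map Matrix.TransvectionStruct.toMatrix).prod)))
          = (u.image (Multiset.map (matN ((Ls.map Matrix.TransvectionStruct.toMatrix).prod)))).image
              (Multiset.map (matN t.toMatrix)) := by
        rw [matN_mul, Finset.image_image]
        have hmm : Multiset.map (matN t.toMatrix ∘
              matN ((Ls.map Matrix.TransvectionStruct.toMatrix).prod))
            = Multiset.map (matN t.toMatrix) ∘
              Multiset.map (matN ((Ls.map Matrix.TransvectionStruct.toMatrix).prod)) :=
          funext fun m => (Multiset.map_map _ _ _).symm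
        rw [hmm]
      rw [List.map_cons, List.prod_cons, hsplit]
      obtain ⟨i, j, hij, c⟩ := t
      rw [Matrix.TransvectionStruct.toMatrix_mk]
      exact closureTN i j c hij _ (ih u hu)

lemma diag_one (D : Fin 3 → ZMod 2) (h : IsUnit (Matrix.diagonal D).det) :
    Matrix.diagonal D = 1 := by
  have hD : ∀ i, D i = 1 := by
    intro i
    have hne : D i ≠ 0 := by
      intro h0
      rw [Matrix.det_diagonal] at h
      rw [Finset.prod_eq_zero (Finset.mem_univ i) h0] at h
      exact h.ne_zero rfl
    have h2 : ∀ x : ZMod 2, x ≠ 0 → x = 1 := by decide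
    exact h2 _ hne
  rw [funext hD]
  exact Matrix.diagonal_one

def gM (σ : W3 ≃ₗ[ZMod 2] W3) : Finset (Multiset V3) :=
  M0.image (Multiset.map (actVar σ))

lemma up (σ : W3 ≃ₗ[ZMod 2] W3) : encVFS (gM σ) ∈ TN := by
  set A := LinearMap.toMatrix' (σ : W3 →ₗ[ZMod 2] W3) with hAdef
  have hA : ∀ v, A.mulVec v = σ v := by
    intro v
    rw [← Matrix.toLin'_apply, hAdef, Matrix.toLin'_toMatrix']
    rfl
  have hcomm : encVFS (gM σ) = N0.image (Multiset.map (matN A)) := by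
    rw [gM, encVFS_img (actVar σ) (matN A) ?_ M0, encVFS_M0]
    intro w
    show enc (σ w.1) = matN A (enc w.1)
    rw [matN, dec_enc, hA]
  rw [hcomm]
  obtain ⟨L, L', D, hdec⟩ := Matrix.Pivot.exists_list_transvec_mul_diagonal_mul_list_transvec A
  have hUnit : IsUnit A.det := by
    apply Matrix.isUnit_det_of_right_inverse
      (B := LinearMap.toMatrix' (σ.symm : W3 →ₗ[ZMod 2] W3))
    rw [← LinearMap.toMatrix'_comp]
    rw [show (σ : W3 →ₗ[ZMod 2] W3) ∘ₗ (σ.symm : W3 →ₗ[ZMod 2] W3) = LinearMap.id from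
      LinearMap.ext fun x => σ.apply_symm_apply x]
    exact LinearMap.toMatrix'_id
  have hDet : IsUnit (Matrix.diagonal D).det := by
    have hd := congrArg Matrix.det hdec
    rw [Matrix.det_mul, Matrix.det_mul, Matrix.TransvectionStruct.det_toMatrix_prod,
      Matrix.TransvectionStruct.det_toMatrix_prod, one_mul, mul_one] at hd
    rwa [hd] at hUnit
  rw [diag_one D hDet, Matrix.mul_one, ← List.prod_append, ← List.map_append] at hdec
  rw [hdec]
  exact trans_chain (L ++ L') N0 N0_mem

lemma low : ∀ u ∈ TN, ∃ σ : W3 ≃ₗ[ZMod 2] W3, encVFS (gM σ) = u := by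
  intro u hu
  rw [TN, List.mem_toFinset, ← himg, List.mem_map] at hu
  obtain ⟨p, hp, hpu⟩ := hu
  have hinv := invLMP p hp
  refine ⟨LinearEquiv.ofLinear (Matrix.toLin' p.1) (Matrix.toLin' p.2) ?_ ?_, ?_⟩
  · apply LinearMap.ext; intro v
    simp only [LinearMap.comp_apply, Matrix.toLin'_apply, LinearMap.id_apply]
    exact (hinv v).1
  · apply LinearMap.ext; intro v
    simp only [LinearMap.comp_apply, Matrix.toLin'_apply, LinearMap.id_apply]
    exact (hinv v).2
  · rw [gM, encVFS_img _ (matN p.1) ?_ M0, encVFS_M0, hpu]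
    intro w
    show enc ((LinearEquiv.ofLinear (Matrix.toLin' p.1) (Matrix.toLin' p.2) _ _) w.1)
        = matN p.1 (enc w.1)
    rw [matN, dec_enc, LinearEquiv.ofLinear_apply, Matrix.toLin'_apply]

lemma actVar_inj (σ : W3 ≃ₗ[ZMod 2] W3) : Function.Injective (actVar σ) := by
  intro a b h
  exact Subtype.ext (σ.injective (congrArg Subtype.val h))

lemma hactP (σ : W3 ≃ₗ[ZMod 2] W3) :
    actP σ (X1 ^ 2 * X2 * X3 + X1 ^ 2 * X12 * X3 + X1 ^ 2 * X2 * X13 +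
      X1 ^ 2 * X12 * X13 + X1 * X2 * X12 * X23 + X1 * X2 * X12 * X123 +
      X1 * X3 * X13 * X23 + X1 * X3 * X13 * X123) = FP (gM σ) := by
  rw [← FPM0]
  show MvPolynomial.rename (actVar σ) (FP M0) = FP (gM σ)
  rw [rename_FP _ (actVar_inj σ) M0, gM]

/-- the orbit of
`Λ₃ = X₁²X₂X₃ + X₁²X₁₂X₃ + X₁²X₂X₁₃ + X₁²X₁₂X₁₃ + X₁X₂X₁₂X₂₃ + X₁X₂X₁₂X₁₂₃ +
X₁X₃X₁₃X₂₃ + X₁X₃X₁₃X₁₂₃` under the action of the linear automorphism group of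
`W` on `P3` has exactly 21 elements. -/
theorem stmt_17 :
    Set.ncard {Λ' : P3 | ∃ σ : W3 ≃ₗ[ZMod 2] W3,
      actP σ (X1 ^ 2 * X2 * X3 + X1 ^ 2 * X12 * X3 + X1 ^ 2 * X2 * X13 +
        X1 ^ 2 * X12 * X13 + X1 * X2 * X12 * X23 + X1 * X2 * X12 * X123 +
        X1 * X3 * X13 * X23 + X1 * X3 * X13 * X123) = Λ'} = 21 := by
  have hrange : {Λ' : P3 | ∃ σ : W3 ≃ₗ[ZMod 2] W3,
      actP σ (X1 ^ 2 * X2 * X3 + X1 ^ 2 * X12 * X3 + X1 ^ 2 * X2 * X13 +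
        X1 ^ 2 * X12 * X13 + X1 * X2 * X12 * X23 + X1 * X2 * X12 * X123 +
        X1 * X3 * X13 * X23 + X1 * X3 * X13 * X123) = Λ'}
      = Set.range (FP ∘ gM) := by
    ext x
    simp only [Set.mem_setOf_eq, Set.mem_range, Function.comp_apply, hactP]
  rw [hrange, Set.range_comp, Set.ncard_image_of_injective _ FP_inj,
    ← Set.ncard_image_of_injective (Set.range gM) encVFS_inj]
  have himage : encVFS '' Set.range gM = ↑TN := by
    apply Set.Subset.antisymm
    · rintro x ⟨s, ⟨σ, rfl⟩, rfl⟩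
      exact Finset.mem_coe.mpr (up σ)
    · intro u hu
      obtain ⟨σ, hσ⟩ := low u (Finset.mem_coe.mp hu)
      exact ⟨gM σ, ⟨σ, rfl⟩, hσ⟩
  rw [himage, Set.ncard_coe_finset, cardTN]

end
end
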